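/- arXiv:2008.01489 — 6 statements merged into one kernel-verified Lean document; each statement's English description precedes it below -/
import Mathlib

section
/- (Characterization of no-synchronization zero points, Remark 2.3.) Assume in addition that α > 0 or q < 1. Let z* ∈ [0,1]^N have at least two distinct coordinates. Then F(z*) = 0 if and only if: (i) the quantity c_h := f(z*_h) − z*_h/(1−α−β) takes a common value c for all h = 1,…,N, and (ii) α·(1/N)∑_{i=1}^N z*_i + βq + (1−α−β)c = 0. Moreover, in that case c ∈ (−(α+β)/(1−α−β), 0), and in particular (1−α−β) f(z*_h) < z*_h and (1−α−β) f(z*_h) > z*_h − α − β for every h. -/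
/-!
At a zero of `F` every coordinate satisfies `(1 - α - β) f(z_h) = z_h - S` with the same input
`S = α · mean z + β q`, so `c_h = -S / (1 - α - β)` for all `h`. Two distinct coordinates in
`[0, 1]` force the mean strictly into `(0, 1)`, and then `α > 0` or `q < 1` gives
`0 < S < α + β`, which is exactly the range claimed for `c` and the two bounds on `f(z_h)`.
-/

noncomputable section

/-- The drift field of the interacting system. -/
def Fmap (N : ℕ) (α β q : ℝ) (f : ℝ → ℝ) (z : Fin N → ℝ) : Fin N → ℝ :=
  fun h => α * ((N : ℝ)⁻¹ * ∑ i, z i) + β * q + (1 - α - β) * f (z h) - z h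

open Set

theorem inv_card_mul_sum_mem_Ioo {ι : Type*} [Fintype ι] {z : ι → ℝ}
    (hz : ∀ i, z i ∈ Icc (0 : ℝ) 1) {a b : ι} (hab : z a ≠ z b) :
    (Fintype.card ι : ℝ)⁻¹ * ∑ i, z i ∈ Ioo 0 1 := by
  have hcard : (0 : ℝ) < Fintype.card ι := Nat.cast_pos.2 (Fintype.card_pos_iff.2 ⟨a⟩)
  obtain ⟨lo, hi, hlt⟩ : ∃ lo hi, z lo < z hi := by
    rcases hab.lt_or_gt with h | h
    exacts [⟨a, b, h⟩, ⟨b, a, h⟩]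
  have hpos : 0 < ∑ i, z i :=
    Finset.sum_pos' (fun i _ => (hz i).1) ⟨hi, Finset.mem_univ _, (hz lo).1.trans_lt hlt⟩
  have hlt_card : ∑ i, z i < Fintype.card ι := by
    simpa using Finset.sum_lt_sum (fun i _ => (hz i).2)
      ⟨lo, Finset.mem_univ _, hlt.trans_le (hz hi).2⟩
  rw [inv_mul_eq_div]
  exact ⟨div_pos hpos hcard, (div_lt_one hcard).2 hlt_card⟩

theorem mul_add_mul_mem_Ioo {α β m q : ℝ} (hα : 0 ≤ α) (hβ : 0 ≤ β) (hαβ : 0 < α + β)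
    (hm : m ∈ Ioo 0 1) (hq : q ∈ Ioc 0 1) (hstrict : 0 < α ∨ q < 1) :
    α * m + β * q ∈ Ioo 0 (α + β) := by
  obtain ⟨hm0, hm1⟩ := hm
  obtain ⟨hq0, hq1⟩ := hq
  constructor
  · rcases hα.eq_or_lt with rfl | hα0 <;> nlinarith
  · rcases hstrict with hα0 | hq_lt
    · nlinarith
    · rcases hβ.eq_or_lt with rfl | hβ0 <;> nlinarith

theorem neg_div_mem_Ioo {S B D : ℝ} (hS : S ∈ Ioo 0 B) (hD : 0 < D) :
    -S / D ∈ Ioo (-B / D) 0 :=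
  ⟨div_lt_div_of_pos_right (neg_lt_neg hS.2) hD, div_neg_of_neg_of_pos (neg_neg_of_pos hS.1) hD⟩

theorem sub_div_eq_neg_div_of_mul_eq {D x y S : ℝ} (hD : D ≠ 0) (h : D * y = x - S) :
    y - x / D = -S / D := by
  field_simp
  linarith

theorem forall_mul_eq_sub_iff_exists_const {ι : Type*} {D S : ℝ} {x y : ι → ℝ} (hD : D ≠ 0) :
    (∀ h, D * y h = x h - S) ↔ ∃ c, (∀ h, y h - x h / D = c) ∧ S + D * c = 0 := by
  constructor
  · intro hxy
    refine ⟨-S / D, fun h => sub_div_eq_neg_div_of_mul_eq hD (hxy h), ?_⟩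
    field_simp
    ring
  · rintro ⟨c, hc, hSc⟩ h
    have hcD : D * c = D * y h - x h := by rw [← hc h, mul_sub, mul_div_cancel₀ _ hD]
    linarith

theorem Fmap_eq_zero_iff {N : ℕ} {α β q : ℝ} {f : ℝ → ℝ} {z : Fin N → ℝ} :
    Fmap N α β q f z = 0 ↔
      ∀ h, (1 - α - β) * f (z h) = z h - (α * ((N : ℝ)⁻¹ * ∑ i, z i) + β * q) := by
  simp only [funext_iff, Fmap, Pi.zero_apply]
  exact forall_congr' fun h => by constructor <;> intro <;> linarith

theorem stmt5_general (N : ℕ) (α β q : ℝ)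
    (hα : α ∈ Set.Ico (0 : ℝ) 1) (hβ : β ∈ Set.Ico (0 : ℝ) 1)
    (hαβ : α + β ∈ Set.Ioo (0 : ℝ) 1) (hq : q ∈ Set.Ioc (0 : ℝ) 1)
    (hextra : 0 < α ∨ q < 1)
    (f : ℝ → ℝ)
    (z : Fin N → ℝ) (hz : ∀ h, z h ∈ Set.Icc (0 : ℝ) 1)
    (hdist : ∃ h j, z h ≠ z j) :
    (Fmap N α β q f z = 0 ↔
      ∃ c : ℝ, (∀ h, f (z h) - z h / (1 - α - β) = c) ∧
        α * ((N : ℝ)⁻¹ * ∑ i, z i) + β * q + (1 - α - β) * c = 0) ∧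
    (Fmap N α β q f z = 0 →
      (∀ h, f (z h) - z h / (1 - α - β) ∈ Set.Ioo (-(α + β) / (1 - α - β)) 0) ∧
      (∀ h, (1 - α - β) * f (z h) < z h) ∧
      (∀ h, z h - α - β < (1 - α - β) * f (z h))) := by
  obtain ⟨a, b, hab⟩ := hdist
  have hD : 0 < 1 - α - β := by linarith [hαβ.2]
  have hmean : (N : ℝ)⁻¹ * ∑ i, z i ∈ Ioo 0 1 := by
    simpa using inv_card_mul_sum_mem_Ioo hz hab
  have hS := mul_add_mul_mem_Ioo hα.1 hβ.1 hαβ.1 hmean hq hextra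
  refine ⟨Fmap_eq_zero_iff.trans (forall_mul_eq_sub_iff_exists_const hD.ne'), fun hF => ?_⟩
  have hfz := Fmap_eq_zero_iff.1 hF
  refine ⟨fun h => ?_, fun h => ?_, fun h => ?_⟩
  · rw [sub_div_eq_neg_div_of_mul_eq hD.ne' (hfz h)]
    exact neg_div_mem_Ioo hS hD
  · linarith [hfz h, hS.1]
  · linarith [hfz h, hS.2]

/-- characterization of the no-synchronization zero points of `F`. -/
theorem stmt5 (N : ℕ) (hN : 2 ≤ N) (α β q : ℝ)
    (hα : α ∈ Set.Ico (0 : ℝ) 1) (hβ : β ∈ Set.Ico (0 : ℝ) 1)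
    (hαβ : α + β ∈ Set.Ioo (0 : ℝ) 1) (hq : q ∈ Set.Ioc (0 : ℝ) 1)
    (hextra : 0 < α ∨ q < 1)
    (f : ℝ → ℝ) (hf_mono : StrictMonoOn f (Set.Icc 0 1))
    (hf_maps : ∀ x ∈ Set.Icc (0 : ℝ) 1, f x ∈ Set.Icc (0 : ℝ) 1)
    (hf_smooth : ContDiffOn ℝ 1 f (Set.Icc 0 1))
    (z : Fin N → ℝ) (hz : ∀ h, z h ∈ Set.Icc (0 : ℝ) 1)
    (hdist : ∃ h j, z h ≠ z j) :
    (Fmap N α β q f z = 0 ↔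
      ∃ c : ℝ, (∀ h, f (z h) - z h / (1 - α - β) = c) ∧
        α * ((N : ℝ)⁻¹ * ∑ i, z i) + β * q + (1 - α - β) * c = 0) ∧
    (Fmap N α β q f z = 0 →
      (∀ h, f (z h) - z h / (1 - α - β) ∈ Set.Ioo (-(α + β) / (1 - α - β)) 0) ∧
      (∀ h, (1 - α - β) * f (z h) < z h) ∧
      (∀ h, z h - α - β < (1 - α - β) * f (z h))) :=
  stmt5_general N α β q hα hβ hαβ hq hextra f z hz hdist

end
end

section
/- (Theorem 3.1, case f = f_LP with β > 0: predictability.) Let f = f_LP and assume β > 0. Let ẑ be the unique root in (0,1) of the quadratic equation (1−α)θ z² + [(1−α)θx* − βθq − (1−α−β)] z − βqθx* = 0. Then (Z_{n,1},…,Z_{n,N}) converges almost surely to ẑ·(1,…,1), and the empirical means (1/n)∑_{k=1}^n (I_{k,1},…,I_{k,N}) converge almost surely to ẑ·(1,…,1); in particular the system almost surely asymptotically synchronizes and is predictable. -/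
/-! The quadratic equation for `ẑ` says exactly that `ẑ·(1,…,1)` is a zero of the drift field
`Fmap`. Around it `Fmap` is strongly monotone on the positive orthant,
`⟨z - ẑ, Fmap z⟩ ≤ -(βq/ẑ)‖z - ẑ‖²`: secants of `f_LP` through `ẑ` have slope at most
`1/(θ(ẑ + x*))`, the mean-field term contributes at most `α‖z - ẑ‖²` by Cauchy–Schwarz, and the
fixed-point equation turns the resulting rate `1 - α - (1 - α - β)/(θ(ẑ + x*))` into `βq/ẑ`.
Since `Z_{n+1} - Z_n = r_n (I_{n+1} - Z_n)` and `E[I_{n+1} - Z_n | ℱ_n] = Fmap Z_n`, the squared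
distance `V_n = ‖Z_n - ẑ‖²` satisfies `E[V_{n+1} | ℱ_n] ≤ (1 - 2(βq/ẑ) r_n) V_n + N r_n²`.
As `∑ r_n² < ∞`, the process `V_n + N ∑_{k ≥ n} r_k²` is a bounded supermartingale, so `V_n`
converges almost surely; as `∑ r_n = ∞`, `E V_n → 0`, so the limit is `0`. The empirical means
of the `I_{k,h}` follow by Cesàro averaging, since `n r_n → 1`. -/

open MeasureTheory ProbabilityTheory Filter

noncomputable section

/-- The zero set of `Fmap` inside the cube `[0,1]^N`. -/
def ZeroSet (N : ℕ) (α β q : ℝ) (f : ℝ → ℝ) : Set (Fin N → ℝ) :=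
  {z | (∀ h, z h ∈ Set.Icc (0 : ℝ) 1) ∧ Fmap N α β q f z = 0}

/-- The interacting system of `N` reinforced stochastic processes: `Z_{0,h}` is
`ℱ_0`-measurable with values in `[0,1]`; the `{0,1}`-valued `I_{n+1,h}` are
`ℱ_{n+1}`-measurable and conditionally independent given `ℱ_n`, with
`P(I_{n+1,h} = 1 | ℱ_n) = α·Z̄_n + βq + (1−α−β)f(Z_{n,h})`; and
`Z_{n+1,h} = (1−r_n) Z_{n,h} + r_n I_{n+1,h}` with `r_n ∈ (0,1]`, `n·r_n → 1`. -/
structure InteractingSystem (N : ℕ) (α β q : ℝ) (f : ℝ → ℝ)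
    (Ω : Type*) [mΩ : MeasurableSpace Ω] [StandardBorelSpace Ω] [Nonempty Ω]
    (μ : Measure Ω) [IsProbabilityMeasure μ] where
  ℱ : Filtration ℕ mΩ
  Z : ℕ → Fin N → Ω → ℝ
  I : ℕ → Fin N → Ω → ℝ
  r : ℕ → ℝ
  r_mem : ∀ n, r n ∈ Set.Ioc (0 : ℝ) 1
  r_lim : Tendsto (fun n : ℕ => (n : ℝ) * r n) atTop (nhds 1)
  Z0_meas : ∀ h, Measurable[ℱ 0] (Z 0 h)
  Z0_mem : ∀ h ω, Z 0 h ω ∈ Set.Icc (0 : ℝ) 1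
  I_meas : ∀ n h, Measurable[ℱ (n + 1)] (I (n + 1) h)
  I_val : ∀ n h ω, I (n + 1) h ω = 0 ∨ I (n + 1) h ω = 1
  condIndep : ∀ n,
    iCondIndepFun (ℱ n) (ℱ.le n) (m := fun _ : Fin N => (inferInstance : MeasurableSpace ℝ))
      (fun h => I (n + 1) h) μ
  condProb : ∀ n h,
    μ[I (n + 1) h | ℱ n] =ᵐ[μ]
      fun ω => α * ((N : ℝ)⁻¹ * ∑ i, Z n i ω) + β * q + (1 - α - β) * f (Z n h ω)
  Z_rec : ∀ n h ω, Z (n + 1) h ω = (1 - r n) * Z n h ω + r n * I (n + 1) h ω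

/-- The Linear Probability function `f_LP(x) = x/(θ(x+x*))`. -/
def fLP (θ xs x : ℝ) : ℝ := x / (θ * (x + xs))

/-- The quadratic whose roots give the synchronization zero points for `f = f_LP`. -/
def quadLP (α β q θ xs z : ℝ) : ℝ :=
  (1 - α) * θ * z ^ 2 + ((1 - α) * θ * xs - β * θ * q - (1 - α - β)) * z - β * q * θ * xs

open Finset Asymptotics Topology

section StepSize

variable {r : ℕ → ℝ}

theorem isEquivalent_inv_of_tendsto_mul (hr : Tendsto (fun n : ℕ => (n : ℝ) * r n) atTop (𝓝 1)) :
    r ~[atTop] fun n => (n : ℝ)⁻¹ := by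
  refine isEquivalent_of_tendsto_one (hr.congr' ?_)
  filter_upwards [eventually_ne_atTop 0] with n hn
  simp [div_eq_mul_inv, mul_comm]

theorem summable_sq_of_isEquivalent_inv (hr : r ~[atTop] fun n => (n : ℝ)⁻¹) :
    Summable fun n => r n ^ 2 :=
  summable_of_isBigO_nat (by simpa only [inv_pow] using Real.summable_nat_pow_inv.2 one_lt_two)
    (hr.isBigO.pow 2)

theorem tendsto_sum_range_atTop_of_isEquivalent_inv (hr0 : ∀ n, 0 ≤ r n)
    (hr : r ~[atTop] fun n => (n : ℝ)⁻¹) :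
    Tendsto (fun n => ∑ k ∈ range n, r k) atTop atTop :=
  (not_summable_iff_tendsto_nat_atTop_of_nonneg hr0).1 fun hs =>
    Real.not_summable_natCast_inv (summable_of_isBigO_nat hs hr.symm.isBigO)

theorem tendsto_succ_mul_of_tendsto_mul (hr : Tendsto (fun n : ℕ => (n : ℝ) * r n) atTop (𝓝 1)) :
    Tendsto (fun n : ℕ => ((n : ℝ) + 1) * r n) atTop (𝓝 1) := by
  have hr0 := (isEquivalent_inv_of_tendsto_mul hr).symm.tendsto_nhds tendsto_inv_atTop_nhds_zero_nat
  simpa [add_mul] using hr.add hr0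

end StepSize

theorem le_mul_exp_sum_sub_sum {d a : ℕ → ℝ} {M : ℕ} (hd : ∀ n, 0 ≤ d n)
    (h : ∀ n ≥ M, d (n + 1) ≤ (1 - a n) * d n) :
    ∀ n ≥ M, d n ≤ d M * Real.exp (∑ k ∈ range M, a k - ∑ k ∈ range n, a k) := by
  intro n hn
  induction n, hn using Nat.le_induction with
  | base => simp
  | succ n hn ih =>
    calc d (n + 1) ≤ (1 - a n) * d n := h n hn
      _ ≤ Real.exp (-a n) * d n := by
        gcongr
        · exact hd n
        · linarith [Real.add_one_le_exp (-a n)]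
      _ ≤ Real.exp (-a n) * (d M * Real.exp (∑ k ∈ range M, a k - ∑ k ∈ range n, a k)) := by
        gcongr
      _ = d M * Real.exp (∑ k ∈ range M, a k - ∑ k ∈ range (n + 1), a k) := by
        rw [sum_range_succ, mul_left_comm, ← Real.exp_add]
        ring_nf

theorem tendsto_zero_of_le_one_sub_mul {d a : ℕ → ℝ} {M : ℕ} (hd : ∀ n, 0 ≤ d n)
    (ha : Tendsto (fun n => ∑ k ∈ range n, a k) atTop atTop)
    (h : ∀ n ≥ M, d (n + 1) ≤ (1 - a n) * d n) : Tendsto d atTop (𝓝 0) := by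
  have hexp : Tendsto (fun n => d M * Real.exp (∑ k ∈ range M, a k - ∑ k ∈ range n, a k))
      atTop (𝓝 0) := by
    simpa [sub_eq_add_neg] using (Real.tendsto_exp_atBot.comp (tendsto_atBot_add_const_left _ _
      (tendsto_neg_atTop_atBot.comp ha))).const_mul (d M)
  exact squeeze_zero' (Eventually.of_forall hd)
    (eventually_atTop.2 ⟨M, le_mul_exp_sum_sub_sum hd h⟩) hexp

theorem tendsto_zero_of_le_one_sub_mul_add_mul {e a b : ℕ → ℝ} (he : ∀ n, 0 ≤ e n)
    (ha0 : ∀ n, 0 ≤ a n) (ha : Tendsto a atTop (𝓝 0))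
    (ha_sum : Tendsto (fun n => ∑ k ∈ range n, a k) atTop atTop) (hb : Tendsto b atTop (𝓝 0))
    (h : ∀ n, e (n + 1) ≤ (1 - a n) * e n + a n * b n) : Tendsto e atTop (𝓝 0) := by
  refine tendsto_order.2 ⟨fun ε hε => Eventually.of_forall fun n => hε.trans_le (he n),
    fun ε hε => ?_⟩
  obtain ⟨M, hM⟩ := eventually_atTop.1 ((ha.eventually (eventually_le_nhds one_pos)).and
    (hb.eventually (eventually_le_nhds (half_pos hε))))
  -- `(e n - ε / 2)⁺` contracts by `1 - a n` as soon as `a n ≤ 1` and `b n ≤ ε / 2`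
  have hd : Tendsto (fun n => max (e n - ε / 2) 0) atTop (𝓝 0) := by
    refine tendsto_zero_of_le_one_sub_mul (M := M) (fun n => le_max_right _ _) ha_sum
      fun n hn => ?_
    obtain ⟨ha1, hbε⟩ := hM n hn
    have h1 : 0 ≤ 1 - a n := by linarith
    refine max_le ?_ (mul_nonneg h1 (le_max_right _ _))
    calc e (n + 1) - ε / 2 ≤ (1 - a n) * (e n - ε / 2) := by
          nlinarith [h n, mul_le_mul_of_nonneg_left hbε (ha0 n)]
      _ ≤ (1 - a n) * max (e n - ε / 2) 0 := mul_le_mul_of_nonneg_left (le_max_left _ _) h1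
  filter_upwards [hd.eventually (eventually_lt_nhds (half_pos hε))] with n hn
  linarith [le_max_left (e n - ε / 2) 0]

theorem tendsto_cesaro_of_eq_one_sub_mul_add_mul {x y r : ℕ → ℝ} {a B : ℝ}
    (hrec : ∀ k, y (k + 1) = (1 - r k) * y k + r k * x k) (hB : ∀ k, |x k - y k| ≤ B)
    (hr : Tendsto (fun k : ℕ => ((k : ℝ) + 1) * r k) atTop (𝓝 1))
    (hy : Tendsto y atTop (𝓝 a)) :
    Tendsto (fun n : ℕ => (n : ℝ)⁻¹ * ∑ k ∈ range n, x k) atTop (𝓝 a) := by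
  set u : ℕ → ℝ := fun k => (x k - y k) * (1 - ((k : ℝ) + 1) * r k)
  have hsum : ∀ n, ∑ k ∈ range n, x k = n * y n + ∑ k ∈ range n, u k := by
    intro n
    induction n with
    | zero => simp
    | succ n ih =>
      rw [sum_range_succ, ih, sum_range_succ, hrec]
      push_cast
      ring
  have hu : Tendsto u atTop (𝓝 0) := by
    have hlim : Tendsto (fun k : ℕ => B * |1 - ((k : ℝ) + 1) * r k|) atTop (𝓝 0) := by
      simpa using ((tendsto_const_nhds (x := (1 : ℝ))).sub hr).abs.const_mul B
    refine squeeze_zero_norm (fun k => ?_) hlim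
    rw [Real.norm_eq_abs, abs_mul]
    exact mul_le_mul_of_nonneg_right (hB k) (abs_nonneg _)
  have hlim := hy.add hu.cesaro
  rw [add_zero] at hlim
  refine hlim.congr' ?_
  filter_upwards [eventually_ne_atTop 0] with n hn
  rw [hsum, mul_add, inv_mul_cancel_left₀ (Nat.cast_ne_zero.2 hn)]

section AlmostSupermartingale

variable {Ω : Type*} {mΩ : MeasurableSpace Ω} {μ : Measure Ω}
  {ℱ : Filtration ℕ mΩ} {V : ℕ → Ω → ℝ}

theorem MeasureTheory.StronglyAdapted.integrable_of_abs_le [IsFiniteMeasure μ]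
    (hV : StronglyAdapted ℱ V) {B : ℝ} (hVB : ∀ n ω, |V n ω| ≤ B) (n : ℕ) : Integrable (V n) μ :=
  .of_bound ((hV n).mono (ℱ.le n)).aestronglyMeasurable B (ae_of_all _ (hVB n))

theorem condExp_add_mul_of_stronglyMeasurable [IsFiniteMeasure μ] {m : MeasurableSpace Ω}
    (hm : m ≤ mΩ) {A c X : Ω → ℝ} (hA : StronglyMeasurable[m] A) (hAi : Integrable A μ)
    (hc : StronglyMeasurable[m] c) (hX : Integrable X μ) (hcX : Integrable (c * X) μ) :
    μ[A + c * X|m] =ᵐ[μ] A + c * μ[X|m] := by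
  have h := condExp_add hAi hcX m
  rw [condExp_of_stronglyMeasurable hm hA hAi] at h
  exact h.trans (EventuallyEq.rfl.add (condExp_mul_of_stronglyMeasurable_left hc hcX hX))

theorem ae_exists_tendsto_of_condExp_le_add [IsProbabilityMeasure μ] {w : ℕ → ℝ} {B : ℝ}
    (hV : StronglyAdapted ℱ V) (hVB : ∀ n ω, |V n ω| ≤ B) (hw0 : ∀ n, 0 ≤ w n) (hw : Summable w)
    (hcond : ∀ n, μ[V (n + 1)|ℱ n] ≤ᵐ[μ] fun ω => V n ω + w n) :
    ∀ᵐ ω ∂μ, ∃ c, Tendsto (fun n => V n ω) atTop (𝓝 c) := by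
  set t : ℕ → ℝ := fun n => ∑' k, w (k + n)
  have ht0 : ∀ n, 0 ≤ t n := fun n => tsum_nonneg fun k => hw0 _
  have ht_le : ∀ n, t n ≤ ∑' k, w k := fun n => by
    linarith [hw.sum_add_tsum_nat_add n, sum_nonneg fun k (_ : k ∈ range n) => hw0 k]
  have ht_succ : ∀ n, t n = w n + t (n + 1) := fun n => by
    simpa [t, add_assoc, add_comm 1] using ((summable_nat_add_iff n).2 hw).tsum_eq_zero_add
  set Y : ℕ → Ω → ℝ := fun n ω => V n ω + t n
  have hYB : ∀ n ω, |Y n ω| ≤ B + ∑' k, w k := fun n ω => by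
    simp only [Y]
    have := abs_add_le (V n ω) (t n)
    rw [abs_of_nonneg (ht0 n)] at this
    linarith [hVB n ω, ht_le n]
  have hYadapted : StronglyAdapted ℱ Y := fun n =>
    ((hV n).measurable.add_const (t n)).stronglyMeasurable
  have hY : Supermartingale Y ℱ μ := by
    refine supermartingale_nat hYadapted (hYadapted.integrable_of_abs_le hYB) fun n => ?_
    have hsplit : μ[Y (n + 1)|ℱ n] =ᵐ[μ] μ[V (n + 1)|ℱ n] + fun _ => t (n + 1) := by
      refine (condExp_add (hV.integrable_of_abs_le hVB (n + 1)) (integrable_const _) _).trans ?_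
      rw [condExp_const (ℱ.le n)]
    filter_upwards [hsplit, hcond n] with ω h1 h2
    simp only [h1, Pi.add_apply, Y, ht_succ n] at h2 ⊢
    linarith
  have hbdd : ∀ n, eLpNorm ((-Y) n) 1 μ ≤ (B + ∑' k, w k).toNNReal := fun n => by
    simpa [ENNReal.ofReal] using
      eLpNorm_le_of_ae_bound (p := 1) (μ := μ) (ae_of_all _ fun ω => by simpa using hYB n ω)
  filter_upwards [hY.neg.exists_ae_tendsto_of_bdd hbdd] with ω ⟨c, hc⟩
  have hV_lim := hc.neg.sub (tendsto_sum_nat_add w)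
  rw [sub_zero] at hV_lim
  exact ⟨-c, hV_lim.congr fun n => by simp [Y, t]⟩

theorem tendsto_integral_zero_of_condExp_le [IsProbabilityMeasure μ] {r : ℕ → ℝ} {c C : ℝ}
    (hc : 0 < c) (hV0 : ∀ n ω, 0 ≤ V n ω) (hint : ∀ n, Integrable (V n) μ) (hr0 : ∀ n, 0 ≤ r n)
    (hr : Tendsto r atTop (𝓝 0)) (hr_sum : Tendsto (fun n => ∑ k ∈ range n, r k) atTop atTop)
    (hcond : ∀ n, μ[V (n + 1)|ℱ n] ≤ᵐ[μ] fun ω => (1 - c * r n) * V n ω + C * r n ^ 2) :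
    Tendsto (fun n => ∫ ω, V n ω ∂μ) atTop (𝓝 0) := by
  refine tendsto_zero_of_le_one_sub_mul_add_mul (a := fun n => c * r n)
    (b := fun n => C / c * r n) (fun n => integral_nonneg (hV0 n))
    (fun n => mul_nonneg hc.le (hr0 n)) (by simpa using hr.const_mul c)
    (by simpa [← mul_sum] using hr_sum.const_mul_atTop hc) (by simpa using hr.const_mul (C / c))
    fun n => ?_
  calc ∫ ω, V (n + 1) ω ∂μ = ∫ ω, μ[V (n + 1)|ℱ n] ω ∂μ := (integral_condExp (ℱ.le n)).symm
    _ ≤ ∫ ω, (1 - c * r n) * V n ω + C * r n ^ 2 ∂μ :=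
      integral_mono_ae integrable_condExp (((hint n).const_mul _).add (integrable_const _))
        (hcond n)
    _ = (1 - c * r n) * ∫ ω, V n ω ∂μ + c * r n * (C / c * r n) := by
      rw [integral_add ((hint n).const_mul _) (integrable_const _), integral_const_mul,
        integral_const, probReal_univ, one_smul]
      field_simp

theorem tendstoInMeasure_zero_of_tendsto_integral (hV0 : ∀ n ω, 0 ≤ V n ω)
    (hint : ∀ n, Integrable (V n) μ) (h : Tendsto (fun n => ∫ ω, V n ω ∂μ) atTop (𝓝 0)) :
    TendstoInMeasure μ V atTop 0 := by
  refine tendstoInMeasure_of_tendsto_eLpNorm one_ne_zero (fun n => (hint n).aestronglyMeasurable)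
    aestronglyMeasurable_const ?_
  have heq : ∀ n, eLpNorm (V n) 1 μ = ENNReal.ofReal (∫ ω, V n ω ∂μ) := fun n => by
    rw [eLpNorm_one_eq_lintegral_enorm,
      ofReal_integral_eq_lintegral_ofReal (hint n) (ae_of_all _ (hV0 n))]
    simp_rw [Real.enorm_eq_ofReal (hV0 n _)]
  simp only [sub_zero, heq]
  simpa [Function.comp_def] using (ENNReal.continuous_ofReal.tendsto 0).comp h

/-- A special case of the Robbins–Siegmund theorem. -/
theorem ae_tendsto_zero_of_condExp_le [IsProbabilityMeasure μ] {r : ℕ → ℝ} {c C B : ℝ}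
    (hc : 0 < c) (hC : 0 ≤ C) (hV : StronglyAdapted ℱ V) (hV0 : ∀ n ω, 0 ≤ V n ω)
    (hVB : ∀ n ω, V n ω ≤ B)
    (hr0 : ∀ n, 0 ≤ r n) (hr : Tendsto r atTop (𝓝 0))
    (hr_sum : Tendsto (fun n => ∑ k ∈ range n, r k) atTop atTop)
    (hr_sq : Summable fun n => r n ^ 2)
    (hcond : ∀ n, μ[V (n + 1)|ℱ n] ≤ᵐ[μ] fun ω => (1 - c * r n) * V n ω + C * r n ^ 2) :
    ∀ᵐ ω ∂μ, Tendsto (fun n => V n ω) atTop (𝓝 0) := by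
  have habs : ∀ n ω, |V n ω| ≤ B := fun n ω => (abs_of_nonneg (hV0 n ω)).trans_le (hVB n ω)
  have hint := hV.integrable_of_abs_le habs (μ := μ)
  have hconv := ae_exists_tendsto_of_condExp_le_add hV habs (fun n => by positivity)
    (hr_sq.mul_left C) fun n => (hcond n).trans (ae_of_all _ fun ω => by
      have := mul_nonneg (mul_nonneg hc.le (hr0 n)) (hV0 n ω)
      simp only
      linarith)
  obtain ⟨ns, hns, hae⟩ := (tendstoInMeasure_zero_of_tendsto_integral hV0 hint
    (tendsto_integral_zero_of_condExp_le hc hV0 hint hr0 hr hr_sum hcond)).exists_seq_tendsto_ae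
  filter_upwards [hconv, hae] with ω ⟨c, hc⟩ h0
  rwa [tendsto_nhds_unique (hc.comp hns.tendsto_atTop) h0] at hc

end AlmostSupermartingale

theorem tendsto_pi_nhds_of_sum_sq_sub {ι α : Type*} [Fintype ι] {l : Filter α} {u : α → ι → ℝ}
    {a : ι → ℝ} (h : Tendsto (fun n => ∑ i, (u n i - a i) ^ 2) l (𝓝 0)) : Tendsto u l (𝓝 a) := by
  refine tendsto_pi_nhds.2 fun i => tendsto_iff_norm_sub_tendsto_zero.2 ?_
  have hsq : Tendsto (fun n => (u n i - a i) ^ 2) l (𝓝 0) :=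
    squeeze_zero (fun _ => sq_nonneg _)
      (fun n => single_le_sum (fun j _ => sq_nonneg (u n j - a j)) (mem_univ i)) h
  simpa [Function.comp_def, Real.sqrt_sq_eq_abs] using (Real.continuous_sqrt.tendsto 0).comp hsq

theorem sum_mul_Fmap_le {N : ℕ} {α β q L z : ℝ} {f : ℝ → ℝ} (hα : 0 ≤ α) (hαβ : α + β ≤ 1)
    (hfix : α * z + β * q + (1 - α - β) * f z = z) (x : Fin N → ℝ)
    (hf : ∀ h, (x h - z) * (f (x h) - f z) ≤ L * (x h - z) ^ 2) :
    ∑ h, (x h - z) * Fmap N α β q f x h ≤ -(1 - α - (1 - α - β) * L) * ∑ h, (x h - z) ^ 2 := by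
  obtain rfl | hN := N.eq_zero_or_pos
  · simp
  set s := ∑ h, (x h - z)
  set V := ∑ h, (x h - z) ^ 2
  have hmean : (N : ℝ)⁻¹ * ∑ i, x i - z = s / N := by
    simp only [s, sum_sub_distrib, sum_const, card_univ, Fintype.card_fin, nsmul_eq_mul]
    field_simp
  have hterm : ∀ h, (x h - z) * Fmap N α β q f x h
      = α * (s / N) * (x h - z) + (1 - α - β) * ((x h - z) * (f (x h) - f z)) - (x h - z) ^ 2 := by
    intro h
    rw [← hmean, Fmap]
    linear_combination (x h - z) * hfix
  have hmeanV : α * (s / N) * s ≤ α * V := by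
    rw [mul_assoc]
    refine mul_le_mul_of_nonneg_left ?_ hα
    rw [div_mul_eq_mul_div, ← sq, div_le_iff₀ (by positivity), mul_comm]
    simpa only [card_univ, Fintype.card_fin] using
      sq_sum_le_card_mul_sum_sq (s := univ) (f := fun h => x h - z)
  have hfV : ∑ h, (x h - z) * (f (x h) - f z) ≤ L * V := by
    rw [mul_sum]
    exact sum_le_sum fun h _ => hf h
  have hfV' := mul_le_mul_of_nonneg_left hfV (by linarith : (0 : ℝ) ≤ 1 - α - β)
  rw [sum_congr rfl fun h _ => hterm h, sum_sub_distrib, sum_add_distrib, ← mul_sum, ← mul_sum]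
  linarith

theorem fLP_fixedPoint_of_quadLP_eq_zero {α β q θ xs z : ℝ} (hden : θ * (z + xs) ≠ 0)
    (hroot : quadLP α β q θ xs z = 0) : α * z + β * q + (1 - α - β) * fLP θ xs z = z := by
  have hf : fLP θ xs z * (θ * (z + xs)) = z := div_mul_cancel₀ z hden
  apply mul_right_cancel₀ hden
  rw [quadLP] at hroot
  linear_combination (1 - α - β) * hf - hroot

theorem mul_fLP_sub_le {θ xs x z : ℝ} (hθ : 0 < θ) (hxs : 0 < xs) (hx : 0 ≤ x) (hz : 0 ≤ z) :
    (x - z) * (fLP θ xs x - fLP θ xs z) ≤ (θ * (z + xs))⁻¹ * (x - z) ^ 2 := by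
  have hsecant : fLP θ xs x - fLP θ xs z = (x - z) * (xs / (x + xs)) * (θ * (z + xs))⁻¹ := by
    rw [fLP, fLP]
    field_simp
    ring
  rw [hsecant, show ∀ a b c : ℝ, a * (a * b * c) = c * a ^ 2 * b by intros; ring]
  refine mul_le_of_le_one_right (by positivity) ((div_le_one (by positivity)).2 (by linarith))

theorem sum_mul_Fmap_fLP_le {N : ℕ} {α β q θ xs z : ℝ} (hθ : 0 < θ) (hxs : 0 < xs)
    (hα : 0 ≤ α) (hαβ : α + β ≤ 1) (hz : 0 < z) (hroot : quadLP α β q θ xs z = 0)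
    (x : Fin N → ℝ) (hx : ∀ h, 0 ≤ x h) :
    ∑ h, (x h - z) * Fmap N α β q (fLP θ xs) x h ≤ -(β * q / z) * ∑ h, (x h - z) ^ 2 := by
  have hden : θ * (z + xs) ≠ 0 := by positivity
  have hfix := fLP_fixedPoint_of_quadLP_eq_zero hden hroot
  have hrate : 1 - α - (1 - α - β) * (θ * (z + xs))⁻¹ = β * q / z := by
    rw [eq_div_iff hz.ne']
    rw [fLP, div_eq_mul_inv] at hfix
    linear_combination -hfix
  have := sum_mul_Fmap_le hα hαβ hfix x fun h => mul_fLP_sub_le hθ hxs (hx h) hz.le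
  rwa [hrate] at this

namespace InteractingSystem

variable {Ω : Type*} [MeasurableSpace Ω] [StandardBorelSpace Ω] [Nonempty Ω]
  {μ : Measure Ω} [IsProbabilityMeasure μ] {N : ℕ} {α β q : ℝ} {f : ℝ → ℝ}
  (S : InteractingSystem N α β q f Ω μ)

theorem I_mem (n : ℕ) (h : Fin N) (ω : Ω) : S.I (n + 1) h ω ∈ Set.Icc (0 : ℝ) 1 := by
  rcases S.I_val n h ω with hI | hI <;> simp [hI]

theorem Z_mem (n : ℕ) (h : Fin N) (ω : Ω) : S.Z n h ω ∈ Set.Icc (0 : ℝ) 1 := by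
  induction n with
  | zero => exact S.Z0_mem h ω
  | succ n ih =>
    obtain ⟨hr0, hr1⟩ := S.r_mem n
    rw [S.Z_rec]
    simpa using convex_Icc (0 : ℝ) 1 ih (S.I_mem n h ω) (sub_nonneg.2 hr1) hr0.le (by ring)

theorem Z_measurable (n : ℕ) (h : Fin N) : Measurable[S.ℱ n] (S.Z n h) := by
  induction n generalizing h with
  | zero => exact S.Z0_meas h
  | succ n ih =>
    rw [show S.Z (n + 1) h = fun ω => (1 - S.r n) * S.Z n h ω + S.r n * S.I (n + 1) h ω from
      funext (S.Z_rec n h)]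
    exact (((ih h).mono (S.ℱ.mono n.le_succ) le_rfl).const_mul _).add
      ((S.I_meas n h).const_mul _)

theorem integrable_Z (n : ℕ) (h : Fin N) : Integrable (S.Z n h) μ :=
  .of_mem_Icc 0 1 ((S.Z_measurable n h).mono (S.ℱ.le n) le_rfl).aemeasurable
    (ae_of_all _ (S.Z_mem n h))

theorem integrable_I (n : ℕ) (h : Fin N) : Integrable (S.I (n + 1) h) μ :=
  .of_mem_Icc 0 1 ((S.I_meas n h).mono (S.ℱ.le (n + 1)) le_rfl).aemeasurable
    (ae_of_all _ (S.I_mem n h))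

theorem abs_I_sub_Z_le_one (n : ℕ) (h : Fin N) (ω : Ω) : |S.I (n + 1) h ω - S.Z n h ω| ≤ 1 :=
  abs_sub_le_of_nonneg_of_le (S.I_mem n h ω).1 (S.I_mem n h ω).2 (S.Z_mem n h ω).1
    (S.Z_mem n h ω).2

theorem abs_Z_sub_le_one {z : ℝ} (hz : z ∈ Set.Icc (0 : ℝ) 1) (n : ℕ) (h : Fin N) (ω : Ω) :
    |S.Z n h ω - z| ≤ 1 :=
  abs_sub_le_of_nonneg_of_le (S.Z_mem n h ω).1 (S.Z_mem n h ω).2 hz.1 hz.2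

theorem integrable_sq_Z_sub {z : ℝ} (hz : z ∈ Set.Icc (0 : ℝ) 1) (n : ℕ) (h : Fin N) :
    Integrable (fun ω => (S.Z n h ω - z) ^ 2) μ :=
  .of_bound (((S.Z_measurable n h).mono (S.ℱ.le n) le_rfl).sub_const z |>.pow_const 2
    |>.aestronglyMeasurable) 1 (ae_of_all _ fun ω => by
      rw [Real.norm_eq_abs, abs_of_nonneg (sq_nonneg _)]
      exact (sq_le_one_iff_abs_le_one _).2 (S.abs_Z_sub_le_one hz n h ω))

theorem condExp_I_sub_Z (n : ℕ) (h : Fin N) :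
    μ[S.I (n + 1) h - S.Z n h|S.ℱ n] =ᵐ[μ] fun ω => Fmap N α β q f (fun i => S.Z n i ω) h := by
  filter_upwards [condExp_sub (S.integrable_I n h) (S.integrable_Z n h) (S.ℱ n), S.condProb n h]
    with ω h1 h2
  rw [h1, Pi.sub_apply, h2, condExp_of_stronglyMeasurable (S.ℱ.le n)
    (S.Z_measurable n h).stronglyMeasurable (S.integrable_Z n h), Fmap]

theorem sq_Z_succ_sub_le (z : ℝ) (n : ℕ) (h : Fin N) (ω : Ω) :
    (S.Z (n + 1) h ω - z) ^ 2 ≤ (S.Z n h ω - z) ^ 2 + S.r n ^ 2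
      + 2 * S.r n * (S.Z n h ω - z) * (S.I (n + 1) h ω - S.Z n h ω) := by
  have hX : (S.I (n + 1) h ω - S.Z n h ω) ^ 2 ≤ 1 :=
    (sq_le_one_iff_abs_le_one _).2 (S.abs_I_sub_Z_le_one n h ω)
  calc (S.Z (n + 1) h ω - z) ^ 2
      = (S.Z n h ω - z) ^ 2 + S.r n ^ 2 * (S.I (n + 1) h ω - S.Z n h ω) ^ 2
        + 2 * S.r n * (S.Z n h ω - z) * (S.I (n + 1) h ω - S.Z n h ω) := by
        rw [S.Z_rec]
        ring
    _ ≤ _ := by gcongr; exact mul_le_of_le_one_right (sq_nonneg _) hX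

theorem condExp_sq_sub_le {z : ℝ} (hz : z ∈ Set.Icc (0 : ℝ) 1) (n : ℕ) (h : Fin N) :
    μ[fun ω => (S.Z (n + 1) h ω - z) ^ 2|S.ℱ n] ≤ᵐ[μ] fun ω => (S.Z n h ω - z) ^ 2 + S.r n ^ 2
      + 2 * S.r n * (S.Z n h ω - z) * Fmap N α β q f (fun i => S.Z n i ω) h := by
  obtain ⟨hr0, hr1⟩ := S.r_mem n
  have hZm := S.Z_measurable n h
  set A : Ω → ℝ := fun ω => (S.Z n h ω - z) ^ 2 + S.r n ^ 2
  set c : Ω → ℝ := fun ω => 2 * S.r n * (S.Z n h ω - z)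
  have hAm : StronglyMeasurable[S.ℱ n] A :=
    ((hZm.sub_const z).pow_const 2 |>.add_const _).stronglyMeasurable
  have hcm : StronglyMeasurable[S.ℱ n] c := ((hZm.sub_const z).const_mul _).stronglyMeasurable
  have hX := (S.integrable_I n h).sub (S.integrable_Z n h)
  have hA : Integrable A μ := .of_bound (hAm.mono (S.ℱ.le n)).aestronglyMeasurable 2
    (ae_of_all _ fun ω => by
      rw [Real.norm_eq_abs, abs_of_nonneg (by positivity)]
      nlinarith [(sq_le_one_iff_abs_le_one _).2 (S.abs_Z_sub_le_one hz n h ω)])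
  have hcX : Integrable (c * (S.I (n + 1) h - S.Z n h)) μ :=
    hX.bdd_mul (c := 2) (hcm.mono (S.ℱ.le n)).aestronglyMeasurable (ae_of_all _ fun ω => by
      rw [Real.norm_eq_abs, abs_mul, abs_mul, abs_two, abs_of_pos hr0]
      nlinarith [S.abs_Z_sub_le_one hz n h ω, abs_nonneg (S.Z n h ω - z)])
  calc μ[fun ω => (S.Z (n + 1) h ω - z) ^ 2|S.ℱ n]
      ≤ᵐ[μ] μ[A + c * (S.I (n + 1) h - S.Z n h)|S.ℱ n] :=
        condExp_mono (S.integrable_sq_Z_sub hz (n + 1) h) (hA.add hcX)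
          (ae_of_all _ (S.sq_Z_succ_sub_le z n h))
    _ =ᵐ[μ] A + c * μ[S.I (n + 1) h - S.Z n h|S.ℱ n] :=
      condExp_add_mul_of_stronglyMeasurable (S.ℱ.le n) hAm hA hcm hX hcX
    _ =ᵐ[μ] _ := by
      filter_upwards [S.condExp_I_sub_Z n h] with ω hω
      simp only [Pi.add_apply, Pi.mul_apply, A, c, hω]

theorem condExp_sum_sq_sub_le {z : ℝ} (hz : z ∈ Set.Icc (0 : ℝ) 1) (n : ℕ) :
    μ[fun ω => ∑ h, (S.Z (n + 1) h ω - z) ^ 2|S.ℱ n] ≤ᵐ[μ] fun ω => ∑ h, (S.Z n h ω - z) ^ 2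
      + 2 * S.r n * ∑ h, (S.Z n h ω - z) * Fmap N α β q f (fun i => S.Z n i ω) h
      + N * S.r n ^ 2 := by
  have hsum : (fun ω => ∑ h, (S.Z (n + 1) h ω - z) ^ 2)
      = ∑ h, fun ω => (S.Z (n + 1) h ω - z) ^ 2 := by
    ext ω
    simp
  rw [hsum]
  filter_upwards [condExp_finsetSum (fun h _ => S.integrable_sq_Z_sub hz (n + 1) h) (S.ℱ n),
    ae_all_iff.2 fun h => S.condExp_sq_sub_le hz n h] with ω h1 h2
  rw [h1, Finset.sum_apply]
  calc ∑ h, μ[fun ω => (S.Z (n + 1) h ω - z) ^ 2|S.ℱ n] ω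
      ≤ ∑ h, ((S.Z n h ω - z) ^ 2 + S.r n ^ 2
        + 2 * S.r n * (S.Z n h ω - z) * Fmap N α β q f (fun i => S.Z n i ω) h) :=
      sum_le_sum fun h _ => h2 h
    _ = _ := by
      simp only [sum_add_distrib, mul_sum, mul_assoc, sum_const, card_univ, Fintype.card_fin,
        nsmul_eq_mul]
      ring

theorem ae_tendsto_of_sum_mul_Fmap_le {z κ : ℝ} (hz : z ∈ Set.Icc (0 : ℝ) 1) (hκ : 0 < κ)
    (hdrift : ∀ x : Fin N → ℝ, (∀ h, x h ∈ Set.Icc (0 : ℝ) 1) →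
      ∑ h, (x h - z) * Fmap N α β q f x h ≤ -κ * ∑ h, (x h - z) ^ 2) :
    ∀ᵐ ω ∂μ, Tendsto (fun n => fun h : Fin N => S.Z n h ω) atTop (𝓝 fun _ : Fin N => z) := by
  have hr := isEquivalent_inv_of_tendsto_mul S.r_lim
  have hr0 : ∀ n, 0 ≤ S.r n := fun n => (S.r_mem n).1.le
  have hV := ae_tendsto_zero_of_condExp_le (μ := μ) (ℱ := S.ℱ) (c := 2 * κ) (C := N) (B := N)
    (V := fun n ω => ∑ h, (S.Z n h ω - z) ^ 2) (by positivity) (by positivity)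
    (fun n => (Finset.measurable_sum _ fun h _ =>
      ((S.Z_measurable n h).sub_const z).pow_const 2).stronglyMeasurable)
    (fun n ω => sum_nonneg fun h _ => sq_nonneg _)
    (fun n ω => by
      simpa using sum_le_sum fun h (_ : h ∈ univ) =>
        (sq_le_one_iff_abs_le_one _).2 (S.abs_Z_sub_le_one hz n h ω))
    hr0 (hr.symm.tendsto_nhds tendsto_inv_atTop_nhds_zero_nat)
    (tendsto_sum_range_atTop_of_isEquivalent_inv hr0 hr) (summable_sq_of_isEquivalent_inv hr)
    fun n => (S.condExp_sum_sq_sub_le hz n).trans (ae_of_all _ fun ω => by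
      have := mul_le_mul_of_nonneg_left (hdrift _ fun h => S.Z_mem n h ω)
        (mul_nonneg zero_le_two (hr0 n))
      simp only
      nlinarith)
  filter_upwards [hV] with ω hω
  exact tendsto_pi_nhds_of_sum_sq_sub hω

end InteractingSystem

theorem stmt7_general {Ω : Type*} [MeasurableSpace Ω] [StandardBorelSpace Ω] [Nonempty Ω]
    (μ : Measure Ω) [IsProbabilityMeasure μ]
    (N : ℕ) (α β q : ℝ)
    (hα : α ∈ Set.Ico (0 : ℝ) 1) (hβpos : 0 < β)
    (hαβ : α + β ∈ Set.Ioo (0 : ℝ) 1) (hq : q ∈ Set.Ioc (0 : ℝ) 1)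
    (θ xs : ℝ) (hθ : 0 < θ) (hθxs : θ * xs ∈ Set.Ioc (0 : ℝ) 1)
    (zhat : ℝ) (hzhat : zhat ∈ Set.Ioo (0 : ℝ) 1)
    (hzhat_root : quadLP α β q θ xs zhat = 0)
    (S : InteractingSystem N α β q (fLP θ xs) Ω μ) :
    (∀ᵐ ω ∂μ, Tendsto (fun n => fun h : Fin N => S.Z n h ω) atTop
      (nhds fun _ : Fin N => zhat)) ∧
    (∀ᵐ ω ∂μ, Tendsto
      (fun n : ℕ => fun h : Fin N => (n : ℝ)⁻¹ * ∑ k ∈ Finset.range n, S.I (k + 1) h ω)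
      atTop (nhds fun _ : Fin N => zhat)) := by
  have hxs : 0 < xs := pos_of_mul_pos_right hθxs.1 hθ.le
  have hZ := S.ae_tendsto_of_sum_mul_Fmap_le ⟨hzhat.1.le, hzhat.2.le⟩
    (div_pos (mul_pos hβpos hq.1) hzhat.1) fun x hx =>
      sum_mul_Fmap_fLP_le hθ hxs hα.1 hαβ.2.le hzhat.1 hzhat_root x fun h => (hx h).1
  refine ⟨hZ, ?_⟩
  filter_upwards [hZ] with ω hω
  rw [tendsto_pi_nhds] at hω ⊢
  exact fun h => tendsto_cesaro_of_eq_one_sub_mul_add_mul (S.Z_rec · h ω)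
    (S.abs_I_sub_Z_le_one · h ω) (tendsto_succ_mul_of_tendsto_mul S.r_lim) (hω h)

/-- Theorem 3.1 for `f = f_LP`, `β > 0`: the system almost surely
asymptotically synchronizes toward the constant `ẑ·(1,…,1)`, where `ẑ` is the unique root
in `(0,1)` of the quadratic `(1−α)θz² + [(1−α)θx* − βθq − (1−α−β)]z − βqθx* = 0`, and so do
the empirical means; in particular the system is predictable. -/
theorem stmt7 {Ω : Type*} [MeasurableSpace Ω] [StandardBorelSpace Ω] [Nonempty Ω]
    (μ : Measure Ω) [IsProbabilityMeasure μ]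
    (N : ℕ) (hN : 1 ≤ N) (α β q : ℝ)
    (hα : α ∈ Set.Ico (0 : ℝ) 1) (hβ : β ∈ Set.Ico (0 : ℝ) 1) (hβpos : 0 < β)
    (hαβ : α + β ∈ Set.Ioo (0 : ℝ) 1) (hq : q ∈ Set.Ioc (0 : ℝ) 1)
    (θ xs : ℝ) (hθ : 0 < θ) (hθxs : θ * xs ∈ Set.Ioc (0 : ℝ) 1)
    (hθxs' : 1 - θ ≤ θ * xs)
    (zhat : ℝ) (hzhat : zhat ∈ Set.Ioo (0 : ℝ) 1)
    (hzhat_root : quadLP α β q θ xs zhat = 0)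
    (hzhat_uniq : ∀ w ∈ Set.Ioo (0 : ℝ) 1, quadLP α β q θ xs w = 0 → w = zhat)
    (S : InteractingSystem N α β q (fLP θ xs) Ω μ) :
    (∀ᵐ ω ∂μ, Tendsto (fun n => fun h : Fin N => S.Z n h ω) atTop
      (nhds fun _ : Fin N => zhat)) ∧
    (∀ᵐ ω ∂μ, Tendsto
      (fun n : ℕ => fun h : Fin N => (n : ℝ)⁻¹ * ∑ k ∈ Finset.range n, S.I (k + 1) h ω)
      atTop (nhds fun _ : Fin N => zhat)) :=
  stmt7_general μ N α β q hα hβpos hαβ hq θ xs hθ hθxs zhat hzhat hzhat_root S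

end
end

section
/- (Strict Lyapunov inequality from the proof of Theorem 3.1.) Let f = f_LP with β = 0 and θx* < 1, so that α ∈ (0,1), and set z* = (1−θx*)/θ and z*̄ = z*·(1,…,1) ∈ [0,1]^N. Then Z(F) = {0, z*̄} and for every z ∈ [0,1]^N with z ∉ Z(F) one has ⟨F(z), z − z*̄⟩ < 0, where ⟨·,·⟩ denotes the Euclidean inner product on ℝ^N. -/
noncomputable section

/-!
With `β = 0` each component splits as `F_h(z) = α (m - z_h) + (1 - α) (f(z_h) - z_h)`, where `m` is
the mean of `z`. Pairing with `z - c𝟏` kills the mean part up to the variance, so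
`⟨F(z), z - c𝟏⟩ = -α ∑ (z_h - m)² + (1 - α) ∑ (f(z_h) - z_h)(z_h - c)`.
For `f = f_LP` and its nonzero fixed point `c = z*`, characterised by `θ (c + x*) = 1`, one has
`(f(x) - x)(x - c) = -x (x - c)² / (x + x*)`, so both sums are nonpositive on the cube, and they
vanish together only when `z` is constant with every coordinate in `{0, c}`, i.e. `z ∈ {0, c𝟏}`.
-/

open Finset

section Mean

variable {ι : Type*} [Fintype ι]

theorem sum_sub_mean_eq_zero (z : ι → ℝ) :
    ∑ i, (z i - (Fintype.card ι : ℝ)⁻¹ * ∑ j, z j) = 0 := by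
  rcases isEmpty_or_nonempty ι with hι | hι
  · simp
  · rw [sum_sub_distrib, sum_const, card_univ, nsmul_eq_mul,
      mul_inv_cancel_left₀ (by exact_mod_cast Fintype.card_ne_zero), sub_self]

theorem sum_mean_sub_mul_sub (z : ι → ℝ) (c : ℝ) :
    ∑ i, ((Fintype.card ι : ℝ)⁻¹ * ∑ j, z j - z i) * (z i - c) =
      -∑ i, (z i - (Fintype.card ι : ℝ)⁻¹ * ∑ j, z j) ^ 2 := by
  set m := (Fintype.card ι : ℝ)⁻¹ * ∑ j, z j
  have hcross : ∑ i, (z i - m) * (c - m) = 0 := by rw [← sum_mul, sum_sub_mean_eq_zero, zero_mul]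
  rw [eq_neg_iff_add_eq_zero, ← sum_add_distrib, ← hcross]
  exact sum_congr rfl fun i _ => by ring

end Mean

theorem Fmap_const_of_map_eq_self {N : ℕ} {α q c : ℝ} {f : ℝ → ℝ} (hfc : f c = c) :
    Fmap N α 0 q f (fun _ => c) = 0 := by
  funext h
  have hN : (N : ℝ) ≠ 0 := Nat.cast_ne_zero.2 h.pos.ne'
  simp only [Fmap, hfc, sum_const, card_univ, Fintype.card_fin, nsmul_eq_mul,
    inv_mul_cancel_left₀ hN, Pi.zero_apply]
  ring

theorem sum_Fmap_mul_sub (N : ℕ) (α q c : ℝ) (f : ℝ → ℝ) (z : Fin N → ℝ) :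
    ∑ h, Fmap N α 0 q f z h * (z h - c) =
      -(α * ∑ h, (z h - (N : ℝ)⁻¹ * ∑ j, z j) ^ 2) +
        (1 - α) * ∑ h, (f (z h) - z h) * (z h - c) := by
  have hmean := sum_mean_sub_mul_sub z c
  rw [Fintype.card_fin] at hmean
  rw [← mul_neg, ← hmean, mul_sum _ _ α, mul_sum _ _ (1 - α), ← sum_add_distrib]
  exact sum_congr rfl fun h _ => by simp only [Fmap]; ring

section fLP

variable {θ xs c : ℝ}

theorem fLP_sub_self_mul_sub (hθ : θ ≠ 0) (hc : θ * (c + xs) = 1) {x : ℝ} (hx : x + xs ≠ 0) :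
    (fLP θ xs x - x) * (x - c) = -(x * (x - c) ^ 2 / (x + xs)) := by
  have hcx : c = θ⁻¹ - xs := by field_simp; linarith
  rw [fLP, hcx]
  field_simp
  ring

theorem fLP_eq_self (hc : θ * (c + xs) = 1) : fLP θ xs c = c := by
  rw [fLP, hc, div_one]

end fLP

theorem sum_Fmap_fLP_mul_sub {N : ℕ} {α q θ xs c : ℝ} (hθ : θ ≠ 0) (hc : θ * (c + xs) = 1)
    {z : Fin N → ℝ} (hz : ∀ h, z h + xs ≠ 0) :
    ∑ h, Fmap N α 0 q (fLP θ xs) z h * (z h - c) =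
      -(α * ∑ h, (z h - (N : ℝ)⁻¹ * ∑ j, z j) ^ 2 +
        (1 - α) * ∑ h, z h * (z h - c) ^ 2 / (z h + xs)) := by
  rw [sum_Fmap_mul_sub, sum_congr rfl fun h _ => fLP_sub_self_mul_sub hθ hc (hz h), sum_neg_distrib]
  ring

theorem sum_Fmap_fLP_mul_sub_neg {N : ℕ} {α q θ xs c : ℝ} (hα : α ∈ Set.Ioo (0 : ℝ) 1)
    (hθ : θ ≠ 0) (hxs : 0 < xs) (hc : θ * (c + xs) = 1) {z : Fin N → ℝ} (hz : ∀ h, 0 ≤ z h)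
    (hz0 : z ≠ 0) (hzc : z ≠ fun _ => c) :
    ∑ h, Fmap N α 0 q (fLP θ xs) z h * (z h - c) < 0 := by
  obtain ⟨hα0, hα1⟩ := hα
  set m := (N : ℝ)⁻¹ * ∑ j, z j
  rw [sum_Fmap_fLP_mul_sub hθ hc fun h => (add_pos_of_nonneg_of_pos (hz h) hxs).ne']
  have hvar : 0 ≤ ∑ h, (z h - m) ^ 2 := sum_nonneg fun h _ => sq_nonneg _
  have hdev : 0 ≤ ∑ h, z h * (z h - c) ^ 2 / (z h + xs) :=
    sum_nonneg fun h _ => by have := hz h; positivity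
  by_contra hnonneg
  have hvar0 : ∑ h, (z h - m) ^ 2 = 0 := by nlinarith
  have hdev0 : ∑ h, z h * (z h - c) ^ 2 / (z h + xs) = 0 := by nlinarith
  have hconst (h : Fin N) : z h = m := by
    have := (sum_eq_zero_iff_of_nonneg fun h _ => sq_nonneg (z h - m)).1 hvar0 h (mem_univ h)
    exact sub_eq_zero.1 (pow_eq_zero_iff two_ne_zero |>.1 this)
  obtain ⟨h₀, hh₀⟩ : ∃ h, z h ≠ 0 := by
    by_contra! H
    exact hz0 (funext H)
  have hzc₀ : z h₀ = c := by
    have := (sum_eq_zero_iff_of_nonneg fun h _ => by have := hz h; positivity).1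
      hdev0 h₀ (mem_univ h₀)
    have hpos : 0 < z h₀ + xs := add_pos_of_nonneg_of_pos (hz h₀) hxs
    simpa [hh₀, hpos.ne', sub_eq_zero] using this
  exact hzc (funext fun h => by rw [hconst h, ← hconst h₀, hzc₀])

theorem stmt8_general (N : ℕ) (α q : ℝ)
    (hα : α ∈ Set.Ioo (0 : ℝ) 1)
    (θ xs : ℝ) (hθ : 0 < θ) (hθxs : θ * xs ∈ Set.Ioo (0 : ℝ) 1)
    (hθxs' : 1 - θ ≤ θ * xs) :
    ZeroSet N α 0 q (fLP θ xs) =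
      {(0 : Fin N → ℝ), fun _ => (1 - θ * xs) / θ} ∧
    ∀ z : Fin N → ℝ, (∀ h, z h ∈ Set.Icc (0 : ℝ) 1) →
      z ∉ ZeroSet N α 0 q (fLP θ xs) →
      ∑ h, Fmap N α 0 q (fLP θ xs) z h * (z h - (1 - θ * xs) / θ) < 0 := by
  obtain ⟨hθxs0, hθxs1⟩ := hθxs
  have hxs : 0 < xs := pos_of_mul_pos_right hθxs0 hθ.le
  set c := (1 - θ * xs) / θ with hc_def
  have hc : θ * (c + xs) = 1 := by rw [hc_def]; field_simp; ring
  have hc_Icc : c ∈ Set.Icc (0 : ℝ) 1 :=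
    ⟨div_nonneg (by linarith) hθ.le, (div_le_one hθ).2 (by linarith)⟩
  have hzero_mem : (0 : Fin N → ℝ) ∈ ZeroSet N α 0 q (fLP θ xs) :=
    ⟨fun _ => by simp, Fmap_const_of_map_eq_self (c := 0) (zero_div _)⟩
  have hconst_mem : (fun _ => c) ∈ ZeroSet N α 0 q (fLP θ xs) :=
    ⟨fun _ => hc_Icc, Fmap_const_of_map_eq_self (fLP_eq_self hc)⟩
  have hneg (z : Fin N → ℝ) (hz : ∀ h, z h ∈ Set.Icc (0 : ℝ) 1) (hz0 : z ≠ 0)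
      (hzc : z ≠ fun _ => c) : ∑ h, Fmap N α 0 q (fLP θ xs) z h * (z h - c) < 0 :=
    sum_Fmap_fLP_mul_sub_neg hα hθ.ne' hxs hc (fun h => (hz h).1) hz0 hzc
  have hpair : {(0 : Fin N → ℝ), fun _ => c} ⊆ ZeroSet N α 0 q (fLP θ xs) :=
    Set.insert_subset hzero_mem (Set.singleton_subset_iff.2 hconst_mem)
  refine ⟨Set.Subset.antisymm ?_ hpair,
    fun z hz hzZ => hneg z hz (fun h => hzZ (h ▸ hzero_mem)) fun h => hzZ (h ▸ hconst_mem)⟩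
  rintro z ⟨hz, hF⟩
  by_contra hzZ
  simp only [Set.mem_insert_iff, Set.mem_singleton_iff, not_or] at hzZ
  simpa [hF] using hneg z hz hzZ.1 hzZ.2

/-- strict Lyapunov inequality from the proof of Theorem 3.1, for `f = f_LP`
with `β = 0` and `θx* < 1`: `Z(F) = {0, z*·𝟏}` and `⟨F(z), z − z*·𝟏⟩ < 0` off `Z(F)`. -/
theorem stmt8 (N : ℕ) (hN : 2 ≤ N) (α q : ℝ)
    (hα : α ∈ Set.Ioo (0 : ℝ) 1) (hq : q ∈ Set.Ioc (0 : ℝ) 1)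
    (θ xs : ℝ) (hθ : 0 < θ) (hθxs : θ * xs ∈ Set.Ioo (0 : ℝ) 1)
    (hθxs' : 1 - θ ≤ θ * xs) :
    ZeroSet N α 0 q (fLP θ xs) =
      {(0 : Fin N → ℝ), fun _ => (1 - θ * xs) / θ} ∧
    ∀ z : Fin N → ℝ, (∀ h, z h ∈ Set.Icc (0 : ℝ) 1) →
      z ∉ ZeroSet N α 0 q (fLP θ xs) →
      ∑ h, Fmap N α 0 q (fLP θ xs) z h * (z h - (1 - θ * xs) / θ) < 0 :=
  stmt8_general N α q hα θ xs hθ hθxs hθxs'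

end
end

section
/- (Lemma 3.2, uniqueness part, case f = f_LogP.) Let f = f_LogP and assume θ/4 ≤ (1−α)/(1−α−β). Then the function φ(x) = f(x) − (1−α)x/(1−α−β) + βq/(1−α−β) is strictly decreasing on [0,1] except possibly at the single point x*, and it has exactly one zero z₀ in [0,1]; moreover z₀ ∈ (0,1). Consequently F has a unique synchronization zero point, namely z₀·(1,…,1). -/
/-!
`f_LogP` is a rescaled logistic sigmoid `σ`, so its derivative is `θ σ (1 - σ) ≤ θ / 4`, with
equality only at `x*`. Under `θ / 4 ≤ (1 - α) / (1 - α - β)` the derivative of `φ` is therefore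
negative away from `x*`, so `φ` is strictly decreasing. Since `φ 0 > 0 > φ 1`, `φ` has exactly one
zero `z₀ ∈ (0, 1)`. On constant vectors `F` is `(1 - α - β) φ` in every coordinate, so the
synchronized zeros of `F` are exactly the constant vectors with value `z₀`.
-/

noncomputable section

/-- The Logit Probability function `f_LogP(x) = 1/(1+exp(−θ(x−x*)))`. -/
def fLogP (θ xs x : ℝ) : ℝ := 1 / (1 + Real.exp (-θ * (x - xs)))

/-- `φ(x) = f(x) − (1−α)x/(1−α−β) + βq/(1−α−β)`. -/
def phiSync (α β q : ℝ) (f : ℝ → ℝ) (x : ℝ) : ℝ :=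
  f x - (1 - α) * x / (1 - α - β) + β * q / (1 - α - β)

open Real Set

lemma strictAnti_of_hasDerivAt_neg_of_ne {f f' : ℝ → ℝ} {a : ℝ}
    (hf : ∀ x, HasDerivAt f (f' x) x) (hf' : ∀ x, x ≠ a → f' x < 0) : StrictAnti f := by
  have hcont : ∀ s, ContinuousOn f s := fun _ x _ => (hf x).continuousAt.continuousWithinAt
  refine StrictAntiOn.Iic_union_Ici (a := a) ?_ ?_
  · refine strictAntiOn_of_deriv_neg (convex_Iic a) (hcont _) fun x hx => ?_
    rw [interior_Iic] at hx
    exact (hf x).deriv ▸ hf' x hx.ne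
  · refine strictAntiOn_of_deriv_neg (convex_Ici a) (hcont _) fun x hx => ?_
    rw [interior_Ici] at hx
    exact (hf x).deriv ▸ hf' x hx.ne'

lemma sigmoid_mul_one_sub_sigmoid_lt {x : ℝ} (hx : x ≠ 0) :
    sigmoid x * (1 - sigmoid x) < 1 / 4 := by
  have hne : sigmoid x ≠ 2⁻¹ := by
    rw [← sigmoid_zero]
    exact sigmoid_injective.ne hx
  have hsq : 0 < (sigmoid x - 2⁻¹) ^ 2 := by
    have := sub_ne_zero.2 hne
    positivity
  nlinarith

lemma fLogP_eq_sigmoid (θ xs : ℝ) : fLogP θ xs = fun x => sigmoid (θ * (x - xs)) := by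
  funext x
  rw [fLogP, sigmoid_def, one_div, neg_mul]

lemma hasDerivAt_fLogP (θ xs x : ℝ) :
    HasDerivAt (fLogP θ xs)
      (θ * (sigmoid (θ * (x - xs)) * (1 - sigmoid (θ * (x - xs))))) x := by
  rw [fLogP_eq_sigmoid]
  have hlin : HasDerivAt (fun y => θ * (y - xs)) θ x := by
    simpa using ((hasDerivAt_id x).sub_const xs).const_mul θ
  have hcomp := (hasDerivAt_sigmoid (θ * (x - xs))).comp x hlin
  rw [mul_comm θ]
  exact hcomp

lemma fLogP_pos (θ xs x : ℝ) : 0 < fLogP θ xs x := by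
  rw [fLogP_eq_sigmoid]
  exact sigmoid_pos _

lemma fLogP_lt_one (θ xs x : ℝ) : fLogP θ xs x < 1 := by
  rw [fLogP_eq_sigmoid]
  exact sigmoid_lt_one _

lemma continuous_fLogP (θ xs : ℝ) : Continuous (fLogP θ xs) :=
  continuous_iff_continuousAt.2 fun x => (hasDerivAt_fLogP θ xs x).continuousAt

lemma strictAnti_fLogP_sub_mul {θ c : ℝ} (xs : ℝ) (hθ : 0 < θ) (hc : θ / 4 ≤ c) :
    StrictAnti fun x => fLogP θ xs x - c * x := by
  refine strictAnti_of_hasDerivAt_neg_of_ne (a := xs)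
    (fun x => (hasDerivAt_fLogP θ xs x).sub ((hasDerivAt_id x).const_mul c)) fun x hx => ?_
  have hlt := sigmoid_mul_one_sub_sigmoid_lt (mul_ne_zero hθ.ne' (sub_ne_zero.2 hx))
  simp only [mul_one]
  nlinarith

lemma phiSync_eq (α β q : ℝ) (f : ℝ → ℝ) (x : ℝ) :
    phiSync α β q f x = f x - (1 - α) / (1 - α - β) * x + β * q / (1 - α - β) := by
  rw [phiSync, div_mul_eq_mul_div]

lemma continuous_phiSync (α β q : ℝ) {f : ℝ → ℝ} (hf : Continuous f) :
    Continuous (phiSync α β q f) := by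
  simp only [funext (phiSync_eq α β q f)]
  fun_prop

lemma phiSync_zero_pos {α β q : ℝ} {f : ℝ → ℝ} (hβ : 0 ≤ β) (hq : 0 ≤ q)
    (hαβ : α + β < 1) (hf : 0 < f 0) : 0 < phiSync α β q f 0 := by
  rw [phiSync_eq, mul_zero, sub_zero]
  have : 0 ≤ β * q / (1 - α - β) := div_nonneg (mul_nonneg hβ hq) (by linarith)
  linarith

lemma phiSync_one_neg {α β q : ℝ} {f : ℝ → ℝ} (hβ : 0 ≤ β) (hq : q ≤ 1)
    (hαβ : α + β < 1) (hf : f 1 < 1) : phiSync α β q f 1 < 0 := by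
  have hD : 0 < 1 - α - β := by linarith
  have : phiSync α β q f 1 = f 1 - 1 - β * (1 - q) / (1 - α - β) := by
    rw [phiSync]
    field_simp
    ring
  rw [this]
  have : 0 ≤ β * (1 - q) / (1 - α - β) := div_nonneg (mul_nonneg hβ (by linarith)) hD.le
  linarith

lemma exists_unique_zero_of_strictAntiOn {φ : ℝ → ℝ} {a b : ℝ} (hab : a ≤ b)
    (hanti : StrictAntiOn φ (Icc a b)) (hcont : ContinuousOn φ (Icc a b))
    (ha : 0 < φ a) (hb : φ b < 0) :
    ∃ z ∈ Ioo a b, φ z = 0 ∧ ∀ x ∈ Icc a b, φ x = 0 → x = z := by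
  obtain ⟨z, hz, hφz⟩ := intermediate_value_Ioo' hab hcont ⟨hb, ha⟩
  exact ⟨z, hz, hφz, fun x hx hφx =>
    hanti.injOn hx (Ioo_subset_Icc_self hz) (hφx.trans hφz.symm)⟩

lemma Fmap_const_apply {N : ℕ} {α β : ℝ} (hαβ : 1 - α - β ≠ 0) (q : ℝ) (f : ℝ → ℝ) (c : ℝ)
    (h : Fin N) :
    Fmap N α β q f (fun _ => c) h = (1 - α - β) * phiSync α β q f c := by
  have hN : (N : ℝ) ≠ 0 := Nat.cast_ne_zero.2 h.pos.ne'
  simp only [Fmap, phiSync, Finset.sum_const, Finset.card_univ, Fintype.card_fin, nsmul_eq_mul]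
  field_simp
  ring

lemma const_mem_ZeroSet {N : ℕ} {α β q : ℝ} {f : ℝ → ℝ} {c : ℝ} (hαβ : 1 - α - β ≠ 0)
    (hc : c ∈ Icc 0 1) (hφ : phiSync α β q f c = 0) :
    (fun _ : Fin N => c) ∈ ZeroSet N α β q f :=
  ⟨fun _ => hc, funext fun h => by rw [Fmap_const_apply hαβ q f c h, hφ, mul_zero]; rfl⟩

lemma phiSync_eq_zero_of_mem_ZeroSet {N : ℕ} {α β q : ℝ} {f : ℝ → ℝ} {z : Fin N → ℝ}
    (hαβ : 1 - α - β ≠ 0) (hz : z ∈ ZeroSet N α β q f) (hsync : ∀ h j, z h = z j) (j : Fin N) :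
    phiSync α β q f (z j) = 0 := by
  have hconst : z = fun _ => z j := funext fun i => hsync i j
  have hFj := congrFun hz.2 j
  rw [hconst, Fmap_const_apply hαβ q f (z j) j] at hFj
  exact (mul_eq_zero.1 hFj).resolve_left hαβ

theorem stmt9_general (N : ℕ) (α β q : ℝ)
    (hβ : β ∈ Set.Ico (0 : ℝ) 1)
    (hαβ : α + β ∈ Set.Ioo (0 : ℝ) 1) (hq : q ∈ Set.Ioc (0 : ℝ) 1)
    (θ xs : ℝ) (hθ : 0 < θ)
    (hcase : θ / 4 ≤ (1 - α) / (1 - α - β)) :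
    StrictAntiOn (phiSync α β q (fLogP θ xs)) (Set.Icc 0 1) ∧
    ∃ z₀ ∈ Set.Ioo (0 : ℝ) 1, phiSync α β q (fLogP θ xs) z₀ = 0 ∧
      (∀ x ∈ Set.Icc (0 : ℝ) 1, phiSync α β q (fLogP θ xs) x = 0 → x = z₀) ∧
      (fun _ : Fin N => z₀) ∈ ZeroSet N α β q (fLogP θ xs) ∧
      ∀ z ∈ ZeroSet N α β q (fLogP θ xs), (∀ h j, z h = z j) →
        z = fun _ => z₀ := by
  have hD : 1 - α - β ≠ 0 := by linarith [hαβ.2]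
  have hanti : StrictAnti (phiSync α β q (fLogP θ xs)) := by
    rw [funext (phiSync_eq α β q (fLogP θ xs))]
    exact (strictAnti_fLogP_sub_mul xs hθ hcase).add_const _
  have hφ0 := phiSync_zero_pos (q := q) hβ.1 hq.1.le hαβ.2 (fLogP_pos θ xs 0)
  have hφ1 := phiSync_one_neg (q := q) hβ.1 hq.2 hαβ.2 (fLogP_lt_one θ xs 1)
  obtain ⟨z₀, hz₀, hφz₀, huniq⟩ := exists_unique_zero_of_strictAntiOn zero_le_one
    (hanti.strictAntiOn _) (continuous_phiSync α β q (continuous_fLogP θ xs)).continuousOn hφ0 hφ1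
  exact ⟨hanti.strictAntiOn _, z₀, hz₀, hφz₀, huniq,
    const_mem_ZeroSet hD (Ioo_subset_Icc_self hz₀) hφz₀, fun z hz hsync =>
      funext fun j => huniq _ (hz.1 j) (phiSync_eq_zero_of_mem_ZeroSet hD hz hsync j)⟩

/-- for `f = f_LogP` with `θ/4 ≤ (1−α)/(1−α−β)`, the function `φ` is strictly
decreasing on `[0,1]` and has a unique zero `z₀`, which lies in `(0,1)`; hence `F` has the
unique synchronization zero point `z₀·(1,…,1)`. -/
theorem stmt9 (N : ℕ) (hN : 1 ≤ N) (α β q : ℝ)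
    (hα : α ∈ Set.Ico (0 : ℝ) 1) (hβ : β ∈ Set.Ico (0 : ℝ) 1)
    (hαβ : α + β ∈ Set.Ioo (0 : ℝ) 1) (hq : q ∈ Set.Ioc (0 : ℝ) 1)
    (θ xs : ℝ) (hθ : 0 < θ) (hxs : xs ∈ Set.Ioo (0 : ℝ) 1)
    (hcase : θ / 4 ≤ (1 - α) / (1 - α - β)) :
    StrictAntiOn (phiSync α β q (fLogP θ xs)) (Set.Icc 0 1) ∧
    ∃ z₀ ∈ Set.Ioo (0 : ℝ) 1, phiSync α β q (fLogP θ xs) z₀ = 0 ∧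
      (∀ x ∈ Set.Icc (0 : ℝ) 1, phiSync α β q (fLogP θ xs) x = 0 → x = z₀) ∧
      (fun _ : Fin N => z₀) ∈ ZeroSet N α β q (fLogP θ xs) ∧
      ∀ z ∈ ZeroSet N α β q (fLogP θ xs), (∀ h j, z h = z j) →
        z = fun _ => z₀ :=
  stmt9_general N α β q hβ hαβ hq θ xs hθ hcase

end
end

section
/- (Corollary on eigenvalues, two-block case.) Let N ≥ 2, c > 0, D₁ ≠ D₂ real, and let d₁,…,d_N ∈ {D₁, D₂} with exactly N₁ ∈ {1,…,N−1} indices equal to D₁ and N₂ = N − N₁ equal to D₂. Let A = c²·J + diag(d₁,…,d_N), J the N×N all-ones matrix. Then det(A − λ·Id) = (D₁ − λ)^{N₁−1}·(D₂ − λ)^{N₂−1}·(λ² − (D₁+D₂+c²N)λ + D₁D₂ + c²N₁D₂ + c²N₂D₁) for all λ ∈ ℝ. Moreover: (a) if D₁ ≥ 0 and D₂ ≥ 0 then all eigenvalues of A are ≥ 0; (b) if D₁ = 0 and D₂ < 0 (or vice versa) then A has a strictly positive eigenvalue; (c) if D₁ < 0 and D₂ < 0, then all eigenvalues of A are ≤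 0 if and only if D₁ + D₂ + c²N < 0 and D₁D₂ + c²N₁D₂ + c²N₂D₁ ≥ 0. -/
/-!
For `λ ∉ {D₁, D₂}` the matrix determinant lemma applied to `diag(d - λ) + c²·𝟙𝟙ᵀ` gives
`det (A - λ) = (D₁ - λ)^N₁ (D₂ - λ)^N₂ (1 + c² N₁ / (D₁ - λ) + c² N₂ / (D₂ - λ))`,
which clears to the stated polynomial; continuity in `λ` removes the restriction.
The quadratic factor `λ² - Tλ + P` has discriminant `(D₁ + c²N₁ - D₂ - c²N₂)² + 4c⁴N₁N₂ > 0`,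
so it has a positive root exactly when `T ≥ 0` or `P < 0`; this gives (b) and (c), the
factors `Dᵢ - λ` being nonzero for `λ > 0` when both `Dᵢ < 0`. Part (a) holds because
`A = c²·𝟙𝟙ᵀ + diag d` is positive semidefinite.
-/

noncomputable section

/-- The matrix `A = c²·J + diag(d₁,…,d_N)`, where `J` is the all-ones matrix. -/
def blockMat (N : ℕ) (c : ℝ) (d : Fin N → ℝ) : Matrix (Fin N) (Fin N) ℝ :=
  Matrix.of (fun _ _ => c ^ 2) + Matrix.diagonal d

open Finset Matrix

@[to_additive]
lemma Finset.prod_comp_eq_pow_mul_pow {ι α M : Type*} [Fintype ι] [DecidableEq α] [CommMonoid M]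
    {d : ι → α} {a b : α} (hd : ∀ i, d i = a ∨ d i = b) (g : α → M) :
    ∏ i, g (d i) = g a ^ #{i | d i = a} * g b ^ #{i | d i ≠ a} := by
  rw [← prod_filter_mul_prod_filter_not univ (fun i => d i = a)]
  congr 1
  · rw [prod_congr rfl fun i hi => by rw [(mem_filter.1 hi).2], prod_const]
  · rw [prod_congr rfl fun i hi => by rw [(hd i).resolve_left (mem_filter.1 hi).2], prod_const]

theorem Matrix.det_of_const_add_diagonal {n K : Type*} [Fintype n] [DecidableEq n] [Field K]
    {e : n → K} (he : ∀ i, e i ≠ 0) (t : K) :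
    (of (fun _ _ : n => t) + diagonal e).det = (∏ i, e i) * (1 + ∑ i, t / e i) := by
  have hfactor : of (fun _ _ : n => t) + diagonal e = diagonal e *
      (1 + replicateCol Unit (fun i => t / e i) * replicateRow Unit (fun _ => (1 : K))) := by
    ext i j
    rw [mul_add, mul_one, add_apply, add_apply, diagonal_mul, add_comm]
    simp [replicateCol, replicateRow, mul_apply, mul_div_cancel₀ _ (he i)]
  rw [hfactor, det_mul, det_one_add_replicateCol_mul_replicateRow, det_diagonal]
  simp [dotProduct]

theorem Matrix.exists_mulVec_eq_smul_iff_det_sub_eq_zero {n K : Type*} [Fintype n]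
    [DecidableEq n] [Field K] (A : Matrix n n K) (lam : K) :
    (∃ v ≠ 0, A *ᵥ v = lam • v) ↔ (A - lam • 1).det = 0 := by
  simp only [← exists_mulVec_eq_zero_iff, sub_mulVec, smul_mulVec, one_mulVec, sub_eq_zero]

theorem Matrix.PosSemidef.nonneg_of_mulVec_eq_smul {n : Type*} [Fintype n]
    {A : Matrix n n ℝ} (hA : A.PosSemidef) {lam : ℝ} {v : n → ℝ} (hv : v ≠ 0)
    (h : A *ᵥ v = lam • v) : 0 ≤ lam := by
  have hquad := hA.dotProduct_mulVec_nonneg v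
  rw [h, dotProduct_smul, smul_eq_mul] at hquad
  exact nonneg_of_mul_nonneg_left hquad (dotProduct_star_self_pos_iff.2 hv)

lemma exists_pos_root_of_discrim_pos {T P : ℝ} (hΔ : 0 < T ^ 2 - 4 * P)
    (h : 0 ≤ T ∨ P < 0) : ∃ x, 0 < x ∧ x ^ 2 - T * x + P = 0 := by
  have hsq := Real.sq_sqrt hΔ.le
  have hpos := Real.sqrt_pos.2 hΔ
  refine ⟨(T + √(T ^ 2 - 4 * P)) / 2, ?_, by nlinarith⟩
  rcases h with hT | hP
  · positivity
  · nlinarith [abs_nonneg T, sq_abs T, neg_abs_le T]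

lemma blockQuadratic_discrim_pos {c : ℝ} (hc : c ≠ 0) (D₁ D₂ : ℝ) {n₁ n₂ : ℝ} (hn₁ : 0 < n₁)
    (hn₂ : 0 < n₂) :
    0 < (D₁ + D₂ + c ^ 2 * (n₁ + n₂)) ^ 2 - 4 * (D₁ * D₂ + c ^ 2 * n₁ * D₂ + c ^ 2 * n₂ * D₁) := by
  have hprod : 0 < c ^ 2 * n₁ * (c ^ 2 * n₂) := by positivity
  nlinarith [sq_nonneg (D₁ + c ^ 2 * n₁ - (D₂ + c ^ 2 * n₂))]

lemma blockMat_sub_smul_one (N : ℕ) (c : ℝ) (d : Fin N → ℝ) (lam : ℝ) :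
    blockMat N c d - lam • 1 = of (fun _ _ => c ^ 2) + diagonal (fun i => d i - lam) := by
  rw [blockMat, smul_one_eq_diagonal, add_sub_assoc, diagonal_sub]

lemma blockMat_posSemidef {N : ℕ} (c : ℝ) {d : Fin N → ℝ} (hd : 0 ≤ d) :
    (blockMat N c d).PosSemidef := by
  have hJ : of (fun _ _ : Fin N => c ^ 2) = vecMulVec (fun _ => c) (star fun _ => c) := by
    ext; simp [vecMulVec_apply, sq]
  rw [blockMat, hJ]
  exact (posSemidef_vecMulVec_self_star _).add (.diagonal hd)

section TwoValued

variable {N : ℕ} {c D₁ D₂ : ℝ} {d : Fin N → ℝ} (hd : ∀ i, d i = D₁ ∨ d i = D₂)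
  {N₁ N₂ : ℕ} (hN₁ : #{i | d i = D₁} = N₁) (hN₂ : #{i | d i ≠ D₁} = N₂)
include hd hN₁ hN₂

omit hd in
lemma natCast_eq_add_of_card_filter : (N : ℝ) = N₁ + N₂ := by
  have := card_filter_add_card_filter_not (s := univ) (fun i => d i = D₁)
  rw [hN₁, hN₂, card_univ, Fintype.card_fin] at this
  exact_mod_cast this.symm

lemma det_blockMat_sub_smul_one_of_ne {lam : ℝ} (h₁ : D₁ - lam ≠ 0) (h₂ : D₂ - lam ≠ 0) :
    (blockMat N c d - lam • 1).det = (D₁ - lam) ^ N₁ * (D₂ - lam) ^ N₂ *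
      (1 + (N₁ * (c ^ 2 / (D₁ - lam)) + N₂ * (c ^ 2 / (D₂ - lam)))) := by
  have he : ∀ i, d i - lam ≠ 0 := fun i => by rcases hd i with h | h <;> rwa [h]
  rw [blockMat_sub_smul_one, det_of_const_add_diagonal he,
    prod_comp_eq_pow_mul_pow hd (fun x => x - lam),
    sum_comp_eq_nsmul_add_nsmul hd (fun x => c ^ 2 / (x - lam)), hN₁, hN₂, nsmul_eq_mul,
    nsmul_eq_mul]

variable (hN₁pos : 1 ≤ N₁) (hN₂pos : 1 ≤ N₂)
include hN₁pos hN₂pos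

lemma det_blockMat_sub_smul_one (lam : ℝ) :
    (blockMat N c d - lam • 1).det = (D₁ - lam) ^ (N₁ - 1) * (D₂ - lam) ^ (N₂ - 1) *
      (lam ^ 2 - (D₁ + D₂ + c ^ 2 * N) * lam + (D₁ * D₂ + c ^ 2 * N₁ * D₂ + c ^ 2 * N₂ * D₁)) := by
  suffices h : Set.EqOn (fun lam => (blockMat N c d - lam • 1).det)
      (fun lam => (D₁ - lam) ^ (N₁ - 1) * (D₂ - lam) ^ (N₂ - 1) *
        (lam ^ 2 - (D₁ + D₂ + c ^ 2 * N) * lam + (D₁ * D₂ + c ^ 2 * N₁ * D₂ + c ^ 2 * N₂ * D₁)))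
      {D₁, D₂}ᶜ by
    have hdense : Dense ({D₁, D₂} : Set ℝ)ᶜ := (Set.toFinite _).countable.dense_compl ℝ
    exact congrFun (Continuous.ext_on hdense (by fun_prop) (by fun_prop) h) lam
  intro lam hlam
  simp only [Set.mem_compl_iff, Set.mem_insert_iff, Set.mem_singleton_iff, not_or] at hlam
  have h₁ : D₁ - lam ≠ 0 := sub_ne_zero.2 (Ne.symm hlam.1)
  have h₂ : D₂ - lam ≠ 0 := sub_ne_zero.2 (Ne.symm hlam.2)
  dsimp only
  rw [det_blockMat_sub_smul_one_of_ne hd hN₁ hN₂ h₁ h₂, natCast_eq_add_of_card_filter hN₁ hN₂]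
  obtain ⟨m, rfl⟩ : ∃ m, N₁ = m + 1 := ⟨N₁ - 1, by omega⟩
  obtain ⟨k, rfl⟩ : ∃ k, N₂ = k + 1 := ⟨N₂ - 1, by omega⟩
  simp only [Nat.add_sub_cancel]
  field_simp
  push_cast
  ring

lemma blockMat_exists_pos_eigenvalue (hc : c ≠ 0)
    (h : 0 ≤ D₁ + D₂ + c ^ 2 * N ∨ D₁ * D₂ + c ^ 2 * N₁ * D₂ + c ^ 2 * N₂ * D₁ < 0) :
    ∃ lam : ℝ, 0 < lam ∧ ∃ v ≠ 0, blockMat N c d *ᵥ v = lam • v := by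
  have hΔ := blockQuadratic_discrim_pos hc D₁ D₂ (n₁ := N₁) (n₂ := N₂) (by positivity)
    (by positivity)
  rw [← natCast_eq_add_of_card_filter hN₁ hN₂] at hΔ
  obtain ⟨lam, hlam, hroot⟩ := exists_pos_root_of_discrim_pos hΔ h
  refine ⟨lam, hlam, (exists_mulVec_eq_smul_iff_det_sub_eq_zero _ _).2 ?_⟩
  rw [det_blockMat_sub_smul_one hd hN₁ hN₂ hN₁pos hN₂pos, hroot, mul_zero]

lemma blockMat_eigenvalue_nonpos (h₁ : D₁ < 0) (h₂ : D₂ < 0) (hT : D₁ + D₂ + c ^ 2 * N < 0)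
    (hP : 0 ≤ D₁ * D₂ + c ^ 2 * N₁ * D₂ + c ^ 2 * N₂ * D₁) {lam : ℝ} {v : Fin N → ℝ}
    (hv : v ≠ 0) (h : blockMat N c d *ᵥ v = lam • v) : lam ≤ 0 := by
  by_contra! hlam
  have hdet := (exists_mulVec_eq_smul_iff_det_sub_eq_zero _ lam).1 ⟨v, hv, h⟩
  rw [det_blockMat_sub_smul_one hd hN₁ hN₂ hN₁pos hN₂pos] at hdet
  have hq : 0 < lam ^ 2 - (D₁ + D₂ + c ^ 2 * N) * lam +
      (D₁ * D₂ + c ^ 2 * N₁ * D₂ + c ^ 2 * N₂ * D₁) := by nlinarith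
  exact mul_ne_zero (mul_ne_zero (pow_ne_zero _ (by linarith)) (pow_ne_zero _ (by linarith)))
    hq.ne' hdet

end TwoValued

theorem stmt18_general (N : ℕ) (c : ℝ) (hc : 0 < c)
    (D₁ D₂ : ℝ) (d : Fin N → ℝ)
    (hd : ∀ i, d i = D₁ ∨ d i = D₂)
    (N₁ N₂ : ℕ)
    (hN₁ : (Finset.univ.filter fun i => d i = D₁).card = N₁)
    (hN₁pos : 1 ≤ N₁) (hN₁lt : N₁ ≤ N - 1) (hN₂ : N₂ = N - N₁) :
    (∀ lam : ℝ,
      (blockMat N c d - lam • (1 : Matrix (Fin N) (Fin N) ℝ)).det =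
        (D₁ - lam) ^ (N₁ - 1) * (D₂ - lam) ^ (N₂ - 1) *
          (lam ^ 2 - (D₁ + D₂ + c ^ 2 * N) * lam +
            (D₁ * D₂ + c ^ 2 * N₁ * D₂ + c ^ 2 * N₂ * D₁))) ∧
    (0 ≤ D₁ → 0 ≤ D₂ →
      ∀ (lam : ℝ) (v : Fin N → ℝ), v ≠ 0 →
        (blockMat N c d).mulVec v = lam • v → 0 ≤ lam) ∧
    ((D₁ = 0 ∧ D₂ < 0) ∨ (D₂ = 0 ∧ D₁ < 0) →
      ∃ lam : ℝ, 0 < lam ∧ ∃ v : Fin N → ℝ, v ≠ 0 ∧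
        (blockMat N c d).mulVec v = lam • v) ∧
    (D₁ < 0 → D₂ < 0 →
      ((∀ (lam : ℝ) (v : Fin N → ℝ), v ≠ 0 →
          (blockMat N c d).mulVec v = lam • v → lam ≤ 0) ↔
        (D₁ + D₂ + c ^ 2 * N < 0 ∧
          0 ≤ D₁ * D₂ + c ^ 2 * N₁ * D₂ + c ^ 2 * N₂ * D₁))) := by
  have hcard₂ : #{i | d i ≠ D₁} = N₂ := by
    have := card_filter_add_card_filter_not (s := univ) (fun i => d i = D₁)
    rw [hN₁, card_univ, Fintype.card_fin] at this
    simp only [← ne_eq] at this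
    omega
  have hN₂pos : 1 ≤ N₂ := by omega
  have hpos_eig := blockMat_exists_pos_eigenvalue hd hN₁ hcard₂ hN₁pos hN₂pos hc.ne'
  refine ⟨det_blockMat_sub_smul_one hd hN₁ hcard₂ hN₁pos hN₂pos, fun h₁ h₂ _ _ hv h => ?_, ?_,
    fun h₁ h₂ => ⟨fun hall => ?_, fun ⟨hT, hP⟩ _ _ hv h =>
      blockMat_eigenvalue_nonpos hd hN₁ hcard₂ hN₁pos hN₂pos h₁ h₂ hT hP hv h⟩⟩
  · have hd_nonneg : 0 ≤ d := fun i => by rcases hd i with h | h <;> rwa [h]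
    exact (blockMat_posSemidef c hd_nonneg).nonneg_of_mulVec_eq_smul hv h
  · have hcN₁ : 0 < c ^ 2 * N₁ := by positivity
    have hcN₂ : 0 < c ^ 2 * N₂ := by positivity
    rintro (⟨rfl, h₂⟩ | ⟨rfl, h₁⟩) <;> exact hpos_eig (Or.inr (by nlinarith))
  · by_contra! h
    obtain ⟨lam, hlam, v, hv, heig⟩ := hpos_eig ((le_or_gt 0 _).imp_right h)
    exact hlam.not_ge (hall lam v hv heig)

/-- two-block case: determinant factorization and sign properties of the
eigenvalues of `A = c²·J + diag(d₁,…,d_N)` when the `dᵢ` take exactly the two values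
`D₁ ≠ D₂`, with `N₁` entries equal to `D₁` and `N₂ = N − N₁` entries equal to `D₂`. -/
theorem stmt18 (N : ℕ) (hN : 2 ≤ N) (c : ℝ) (hc : 0 < c)
    (D₁ D₂ : ℝ) (hD : D₁ ≠ D₂) (d : Fin N → ℝ)
    (hd : ∀ i, d i = D₁ ∨ d i = D₂)
    (N₁ N₂ : ℕ)
    (hN₁ : (Finset.univ.filter fun i => d i = D₁).card = N₁)
    (hN₁pos : 1 ≤ N₁) (hN₁lt : N₁ ≤ N - 1) (hN₂ : N₂ = N - N₁) :
    (∀ lam : ℝ,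
      (blockMat N c d - lam • (1 : Matrix (Fin N) (Fin N) ℝ)).det =
        (D₁ - lam) ^ (N₁ - 1) * (D₂ - lam) ^ (N₂ - 1) *
          (lam ^ 2 - (D₁ + D₂ + c ^ 2 * N) * lam +
            (D₁ * D₂ + c ^ 2 * N₁ * D₂ + c ^ 2 * N₂ * D₁))) ∧
    (0 ≤ D₁ → 0 ≤ D₂ →
      ∀ (lam : ℝ) (v : Fin N → ℝ), v ≠ 0 →
        (blockMat N c d).mulVec v = lam • v → 0 ≤ lam) ∧
    ((D₁ = 0 ∧ D₂ < 0) ∨ (D₂ = 0 ∧ D₁ < 0) →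
      ∃ lam : ℝ, 0 < lam ∧ ∃ v : Fin N → ℝ, v ≠ 0 ∧
        (blockMat N c d).mulVec v = lam • v) ∧
    (D₁ < 0 → D₂ < 0 →
      ((∀ (lam : ℝ) (v : Fin N → ℝ), v ≠ 0 →
          (blockMat N c d).mulVec v = lam • v → lam ≤ 0) ↔
        (D₁ + D₂ + c ^ 2 * N < 0 ∧
          0 ≤ D₁ * D₂ + c ^ 2 * N₁ * D₂ + c ^ 2 * N₂ * D₁))) :=
  stmt18_general N c hc D₁ D₂ d hd N₁ N₂ hN₁ hN₁pos hN₁lt hN₂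

end
end

section
/- (Lemma C.1, finiteness of the zero set for polynomial f.) Let N ≥ 1, let f : ℝ → ℝ be a polynomial of degree d ≥ 2, let α, β ∈ [0,1] with 1 − α − β ≠ 0, and let q ∈ ℝ. Define F_i(z) = α·(1/N)∑_{j=1}^N z_j + βq + (1−α−β) f(z_i) − z_i for z ∈ ℝ^N and i = 1,…,N. Then the set {z ∈ ℝ^N : F_i(z) = 0 for all i = 1,…,N} is finite (indeed, even the set of solutions in ℂ^N has at most d^N elements). -/
/-!
Writing `g = X - (1 - α - β) f`, a solution satisfies `g(z_i) = βq + (α/N) ∑ z_j` for every `i`,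
so on the solution set `z_i ^ d` agrees with a polynomial of total degree `< d` (this is where
`d ≥ 2` enters: the right-hand side is affine). Reducing exponents one coordinate at a time, every
polynomial function on the solution set is a combination of the `d ^ N` monomials with all
exponents `< d`. Polynomial functions separate points, so on a finite set of solutions they give
every function, and the number of solutions is at most `d ^ N`.
-/

open MvPolynomial Finset

lemma Set.finite_and_ncard_le_of_forall_finite_subset {α : Type*} {s : Set α} {n : ℕ}
    (h : ∀ t ⊆ s, t.Finite → t.ncard ≤ n) : s.Finite ∧ s.ncard ≤ n := by
  have hfin : s.Finite := by
    by_contra hinf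
    obtain ⟨t, hts, htfin, htcard⟩ := Set.Infinite.exists_subset_ncard_eq hinf (n + 1)
    have := h t hts htfin
    omega
  exact ⟨hfin, h s le_rfl hfin⟩

variable {K σ : Type*} [Field K]

noncomputable def evalOn (T : Set (σ → K)) : MvPolynomial σ K →ₐ[K] (T → K) :=
  AlgHom.pi fun z => aeval (z : σ → K)

@[simp]
lemma evalOn_apply (T : Set (σ → K)) (p : MvPolynomial σ K) (z : T) :
    evalOn T p z = eval (z : σ → K) p := by
  simp [evalOn]

lemma exists_evalOn_eq_one_eq_zero {T : Set (σ → K)} {z₀ z : T} (h : z ≠ z₀) :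
    ∃ p, evalOn T p z₀ = 1 ∧ evalOn T p z = 0 := by
  obtain ⟨i, hi⟩ : ∃ i, (z : σ → K) i ≠ (z₀ : σ → K) i := by
    by_contra! H
    exact h (Subtype.ext (funext H))
  refine ⟨C ((z₀ : σ → K) i - (z : σ → K) i)⁻¹ * (X i - C ((z : σ → K) i)), ?_, ?_⟩
  · simp [inv_mul_cancel₀ (sub_ne_zero.mpr hi.symm)]
  · simp

lemma evalOn_surjective (T : Set (σ → K)) [Finite T] : Function.Surjective (evalOn T) := by
  classical
  have : Fintype T := Fintype.ofFinite T
  have hindicator : ∀ z₀ : T, (fun z => if z₀ = z then 1 else 0) ∈ (evalOn T).range := by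
    intro z₀
    choose! p hp using fun z : T => exists_evalOn_eq_one_eq_zero (z₀ := z₀) (z := z)
    refine ⟨∏ z ∈ univ.erase z₀, p z, funext fun z => ?_⟩
    rw [map_prod, Finset.prod_apply]
    by_cases hz : z₀ = z
    · subst hz
      rw [if_pos rfl]
      exact Finset.prod_eq_one fun z hz => (hp z (ne_of_mem_erase hz)).1
    · rw [if_neg hz]
      exact Finset.prod_eq_zero (mem_erase.mpr ⟨Ne.symm hz, mem_univ z⟩) (hp z (Ne.symm hz)).2
  intro f
  rw [pi_eq_sum_univ f]
  exact Subalgebra.sum_mem _ fun z _ => Subalgebra.smul_mem _ (hindicator z) _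

variable [Fintype σ]

noncomputable def reducedMonomial (d : ℕ) (k : σ → Fin d) : MvPolynomial σ K :=
  monomial (Finsupp.equivFunOnFinite.symm fun i => (k i : ℕ)) 1

theorem evalOn_mem_span_reducedMonomial {T : Set (σ → K)} {d : ℕ}
    (q : σ → MvPolynomial σ K) (hq : ∀ i, (q i).totalDegree < d)
    (hT : ∀ z ∈ T, ∀ i, z i ^ d = eval z (q i)) (p : MvPolynomial σ K) :
    evalOn T p ∈ Submodule.span K (Set.range fun k => evalOn T (reducedMonomial d k)) := by
  induction hn : p.totalDegree using Nat.strong_induction_on generalizing p with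
  | _ n ih =>
  rw [p.as_sum, map_sum]
  refine Submodule.sum_mem _ fun s hs => ?_
  have hc : coeff s p ≠ 0 := mem_support_iff.mp hs
  have hdeg_le : (monomial s (coeff s p)).totalDegree ≤ n :=
    hn ▸ (totalDegree_monomial s hc).trans_le (le_totalDegree hs)
  by_cases hred : ∀ i, s i < d
  · have hmon :
        monomial s (coeff s p) = coeff s p • reducedMonomial d fun i => ⟨s i, hred i⟩ := by
      rw [reducedMonomial, smul_monomial, smul_eq_mul, mul_one]
      congr
      exact (Finsupp.equivFunOnFinite_symm_coe s).symm
    rw [hmon, map_smul]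
    exact Submodule.smul_mem _ _ (Submodule.subset_span ⟨_, rfl⟩)
  push Not at hred
  obtain ⟨i, hi⟩ := hred
  obtain ⟨s', rfl⟩ : ∃ s', s = s' + Finsupp.single i d :=
    ⟨s - Finsupp.single i d, (tsub_add_cancel_of_le (Finsupp.single_le_iff.mpr hi)).symm⟩
  have hX : evalOn T (X i ^ d) = evalOn T (q i) := funext fun z => by simpa using hT z z.2 i
  rw [monomial_add_single] at hdeg_le ⊢
  rw [map_mul, hX, ← map_mul]
  refine ih _ ?_ _ rfl
  calc (monomial s' (coeff _ p) * q i).totalDegree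
      ≤ (monomial s' (coeff _ p)).totalDegree + (q i).totalDegree := totalDegree_mul _ _
    _ < (monomial s' (coeff _ p)).totalDegree + (X i ^ d : MvPolynomial σ K).totalDegree := by
      rw [totalDegree_X_pow]
      exact Nat.add_lt_add_left (hq i) _
    _ = (monomial s' (coeff _ p) * X i ^ d).totalDegree :=
      (totalDegree_mul_of_isDomain (by simpa using hc) (pow_ne_zero _ (X_ne_zero i))).symm
    _ ≤ n := hdeg_le

theorem finite_and_ncard_le_of_pow_eq_eval {T : Set (σ → K)} {d : ℕ}
    (q : σ → MvPolynomial σ K) (hq : ∀ i, (q i).totalDegree < d)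
    (hT : ∀ z ∈ T, ∀ i, z i ^ d = eval z (q i)) :
    T.Finite ∧ T.ncard ≤ d ^ Fintype.card σ := by
  refine Set.finite_and_ncard_le_of_forall_finite_subset fun t htT htfin => ?_
  classical
  have : Finite t := htfin
  have hspan : (⊤ : Submodule K (t → K)) ≤
      Submodule.span K (Set.range fun k => evalOn t (reducedMonomial d k)) := by
    rintro f -
    obtain ⟨p, rfl⟩ := evalOn_surjective t f
    exact evalOn_mem_span_reducedMonomial q hq (fun z hz => hT z (htT hz)) p
  have : Fintype t := Fintype.ofFinite t
  calc t.ncard = Module.finrank K (t → K) := by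
        rw [Module.finrank_fintype_fun_eq_card, Set.ncard_eq_toFinset_card', Set.toFinset_card]
    _ = Module.finrank K (⊤ : Submodule K (t → K)) := (finrank_top K _).symm
    _ ≤ Set.finrank K (Set.range fun k => evalOn t (reducedMonomial d k)) :=
      Submodule.finrank_mono hspan
    _ ≤ Fintype.card (σ → Fin d) := finrank_range_le_card _
    _ = d ^ Fintype.card σ := by simp

theorem finite_and_ncard_le_of_eval_eq_affine {T : Set (σ → K)} {g : Polynomial K} {d : ℕ}
    (hg : g.natDegree = d) (hd : 2 ≤ d) (u : K) (v : σ → K)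
    (hT : ∀ z ∈ T, ∀ i, g.eval (z i) = u + ∑ j, v j * z j) :
    T.Finite ∧ T.ncard ≤ d ^ Fintype.card σ := by
  have hlc : g.coeff d ≠ 0 := hg ▸ Polynomial.leadingCoeff_ne_zero.mpr
    (Polynomial.ne_zero_of_natDegree_gt (n := 0) (by omega))
  refine finite_and_ncard_le_of_pow_eq_eval
    (fun i => (g.coeff d)⁻¹ • (C u + ∑ j, v j • X j - ∑ m ∈ range d, g.coeff m • X i ^ m))
    (fun i => ?_) (fun z hz i => ?_)
  · suffices h : (g.coeff d)⁻¹ • (C u + ∑ j, v j • X j - ∑ m ∈ range d, g.coeff m • X i ^ m)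
        ∈ restrictTotalDegree σ K (d - 1) by
      rw [mem_restrictTotalDegree] at h
      omega
    have hX : ∀ j, (X j : MvPolynomial σ K) ∈ restrictTotalDegree σ K (d - 1) := fun j => by
      rw [mem_restrictTotalDegree, totalDegree_X]
      omega
    have hXpow : ∀ m ∈ range d, (X i ^ m : MvPolynomial σ K) ∈ restrictTotalDegree σ K (d - 1) :=
      fun m hm => by
        rw [mem_restrictTotalDegree, totalDegree_X_pow]
        have := mem_range.mp hm
        omega
    refine Submodule.smul_mem _ _ (Submodule.sub_mem _ (Submodule.add_mem _ ?_ ?_) ?_)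
    · rw [mem_restrictTotalDegree, totalDegree_C]
      exact Nat.zero_le _
    · exact Submodule.sum_mem _ fun j _ => Submodule.smul_mem _ _ (hX j)
    · exact Submodule.sum_mem _ fun m hm => Submodule.smul_mem _ _ (hXpow m hm)
  · have hexpand := Polynomial.eval_eq_sum_range (p := g) (z i)
    rw [hg, sum_range_succ, hT z hz i] at hexpand
    simp only [smul_eq_C_mul, map_mul, map_add, map_sub, map_sum, map_pow, eval_C, eval_X]
    field_simp
    linear_combination -hexpand

theorem stmt19_general (N : ℕ) (f : Polynomial ℝ) (d : ℕ)
    (hdeg : f.natDegree = d) (hd : 2 ≤ d)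
    (α β q : ℝ)
    (hαβ : 1 - α - β ≠ 0) :
    {z : Fin N → ℝ | ∀ i,
        α * ((N : ℝ)⁻¹ * ∑ j, z j) + β * q + (1 - α - β) * f.eval (z i) - z i = 0}.Finite ∧
    {z : Fin N → ℂ | ∀ i,
        (α : ℂ) * ((N : ℂ)⁻¹ * ∑ j, z j) + (β : ℂ) * (q : ℂ) +
          ((1 : ℂ) - (α : ℂ) - (β : ℂ)) * (f.map (algebraMap ℝ ℂ)).eval (z i) - z i = 0}.Finite ∧
    Set.ncard {z : Fin N → ℂ | ∀ i,
        (α : ℂ) * ((N : ℂ)⁻¹ * ∑ j, z j) + (β : ℂ) * (q : ℂ) +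
          ((1 : ℂ) - (α : ℂ) - (β : ℂ)) * (f.map (algebraMap ℝ ℂ)).eval (z i) - z i = 0}
      ≤ d ^ N := by
  have hc : (1 : ℂ) - α - β ≠ 0 := by exact_mod_cast hαβ
  have hg : (Polynomial.X - Polynomial.C ((1 : ℂ) - α - β) * f.map (algebraMap ℝ ℂ)).natDegree
      = d := by
    rw [Polynomial.natDegree_sub_eq_right_of_natDegree_lt] <;>
      rw [Polynomial.natDegree_C_mul hc, Polynomial.natDegree_map, hdeg]
    rw [Polynomial.natDegree_X]
    omega
  refine (and_iff_right_of_imp fun hC => ?_).2 ?_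
  · refine (hC.1.preimage Complex.ofReal_injective.comp_left.injOn).subset fun z hz i => ?_
    have hf : (f.map (algebraMap ℝ ℂ)).eval (z i : ℂ) = f.eval (z i) :=
      Polynomial.eval_map_apply (algebraMap ℝ ℂ) (z i)
    simpa [hf] using congrArg ((↑) : ℝ → ℂ) (hz i)
  refine (finite_and_ncard_le_of_eval_eq_affine hg hd (β * q) (fun _ => α * (N : ℂ)⁻¹)
    fun z hz i => ?_).imp_right (·.trans_eq (by rw [Fintype.card_fin]))
  simp only [Polynomial.eval_sub, Polynomial.eval_mul, Polynomial.eval_X, Polynomial.eval_C,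
    ← Finset.mul_sum]
  linear_combination -hz i

/-- Lemma C.1: for a real polynomial `f` of degree `d ≥ 2` and
`F_i(z) = α·(1/N)∑_j z_j + βq + (1−α−β)·f(z_i) − z_i`, the set of real solutions of
`F = 0` is finite; indeed even the set of complex solutions is finite with at most `d^N`
elements. -/
theorem stmt19 (N : ℕ) (hN : 1 ≤ N) (f : Polynomial ℝ) (d : ℕ)
    (hdeg : f.natDegree = d) (hd : 2 ≤ d)
    (α β q : ℝ) (hα : α ∈ Set.Icc (0 : ℝ) 1) (hβ : β ∈ Set.Icc (0 : ℝ) 1)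
    (hαβ : 1 - α - β ≠ 0) :
    {z : Fin N → ℝ | ∀ i,
        α * ((N : ℝ)⁻¹ * ∑ j, z j) + β * q + (1 - α - β) * f.eval (z i) - z i = 0}.Finite ∧
    {z : Fin N → ℂ | ∀ i,
        (α : ℂ) * ((N : ℂ)⁻¹ * ∑ j, z j) + (β : ℂ) * (q : ℂ) +
          ((1 : ℂ) - (α : ℂ) - (β : ℂ)) * (f.map (algebraMap ℝ ℂ)).eval (z i) - z i = 0}.Finite ∧
    Set.ncard {z : Fin N → ℂ | ∀ i,
        (α : ℂ) * ((N : ℂ)⁻¹ * ∑ j, z j) + (β : ℂ) * (q : ℂ) +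
          ((1 : ℂ) - (α : ℂ) - (β : ℂ)) * (f.map (algebraMap ℝ ℂ)).eval (z i) - z i = 0}
      ≤ d ^ N :=
  stmt19_general N f d hdeg hd α β q hαβ
end
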